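/- arXiv:math/0506255 — 6 statements merged into one kernel-verified Lean document; each statement's English description precedes it below -/
import Mathlib

section
/- Let n ≥ 2 and p ∈ [0,1]. The probability that the Erdős–Rényi random graph G(n,p) is connected is at most (1 - (1-p)^(n-1))^(n-1). -/
open MeasureTheory

noncomputable def bern (p : ℝ) : Measure Bool :=
  ENNReal.ofReal p • Measure.dirac true + ENNReal.ofReal (1 - p) • Measure.dirac false

noncomputable def erMeasure (n : ℕ) (p : ℝ) :
    Measure ({e : Sym2 (Fin n) // ¬ e.IsDiag} → Bool) :=
  Measure.pi fun _ => bern p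

def erGraph (n : ℕ) (ω : {e : Sym2 (Fin n) // ¬ e.IsDiag} → Bool) : SimpleGraph (Fin n) :=
  SimpleGraph.fromEdgeSet {e : Sym2 (Fin n) | ∃ h : ¬ e.IsDiag, ω ⟨e, h⟩ = true}

namespace ER

open Finset ENNReal Relation

attribute [local instance] Classical.propDecidable

/-- generic Fubini for product-form summands over a finite function space -/
lemma fubini {ι : Type*} [Fintype ι] [DecidableEq ι] (F : ι → Bool → ℝ≥0∞) :
    ∑ ω : ι → Bool, ∏ i, F i (ω i) = ∏ i, (F i true + F i false) := by
  rw [← Fintype.prod_sum (fun i (b : Bool) => F i b)]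
  refine Finset.prod_congr rfl fun i _ => ?_
  simp [Fintype.sum_bool]

lemma split {ι : Type*} [Fintype ι] [DecidableEq ι]
    (w : ι → Bool → ℝ≥0∞) (hw : ∀ i, w i true + w i false = 1)
    (pr : ι → Prop) [DecidablePred pr] (g h : (ι → Bool) → ℝ≥0∞)
    (hg : ∀ ω₁ ω₂ : ι → Bool, (∀ i, pr i → ω₁ i = ω₂ i) → g ω₁ = g ω₂)
    (hh : ∀ ω₁ ω₂ : ι → Bool, (∀ i, ¬ pr i → ω₁ i = ω₂ i) → h ω₁ = h ω₂) :
    ∑ ω : ι → Bool, (∏ i, w i (ω i)) * (g ω * h ω)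
      = (∑ ω : ι → Bool, (∏ i, w i (ω i)) * g ω) *
        (∑ ω : ι → Bool, (∏ i, w i (ω i)) * h ω) := by
  set e : ({i // pr i} → Bool) × ({i // ¬ pr i} → Bool) ≃ (ι → Bool) :=
    ((Equiv.sumArrowEquivProdArrow _ _ Bool).symm).trans
      (Equiv.arrowCongr (Equiv.sumCompl pr) (Equiv.refl Bool)) with he_def
  have he : ∀ (σ : {i // pr i} → Bool) (τ : {i // ¬ pr i} → Bool) (i : ι),
      e (σ, τ) i = if hi : pr i then σ ⟨i, hi⟩ else τ ⟨i, hi⟩ := by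
    intro σ τ i
    by_cases hi : pr i
    · simp [he_def, Equiv.sumCompl_symm_apply_of_pos hi, hi]
    · simp [he_def, Equiv.sumCompl_symm_apply_of_neg hi, hi]
  -- weight factorization
  have hW : ∀ (σ : {i // pr i} → Bool) (τ : {i // ¬ pr i} → Bool),
      (∏ i, w i (e (σ, τ) i))
        = (∏ j : {i // pr i}, w j.1 (σ j)) * (∏ j : {i // ¬ pr i}, w j.1 (τ j)) := by
    intro σ τ
    rw [← Fintype.prod_subtype_mul_prod_subtype pr (fun i => w i (e (σ, τ) i))]
    congr 1
    · exact Finset.prod_congr rfl fun j _ => by rw [he]; simp [j.2]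
    · exact Finset.prod_congr rfl fun j _ => by rw [he]; simp [j.2]
  have hgτ : ∀ σ τ, g (e (σ, τ)) = g (e (σ, fun _ => false)) := by
    intro σ τ
    refine hg _ _ fun i hi => ?_
    rw [he, he]; simp [hi]
  have hhσ : ∀ σ τ, h (e (σ, τ)) = h (e (fun _ => false, τ)) := by
    intro σ τ
    refine hh _ _ fun i hi => ?_
    rw [he, he]; simp [hi]
  set G : ({i // pr i} → Bool) → ℝ≥0∞ := fun σ => g (e (σ, fun _ => false)) with hG
  set H : ({i // ¬ pr i} → Bool) → ℝ≥0∞ := fun τ => h (e (fun _ => false, τ)) with hH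
  set A : ({i // pr i} → Bool) → ℝ≥0∞ := fun σ => ∏ j : {i // pr i}, w j.1 (σ j) with hA
  set B : ({i // ¬ pr i} → Bool) → ℝ≥0∞ := fun τ => ∏ j : {i // ¬ pr i}, w j.1 (τ j) with hB
  have hmassA : ∑ σ : {i // pr i} → Bool, A σ = 1 := by
    rw [hA]; rw [fubini (fun (j : {i // pr i}) b => w j.1 b)]
    simp [hw]
  have hmassB : ∑ τ : {i // ¬ pr i} → Bool, B τ = 1 := by
    rw [hB]; rw [fubini (fun (j : {i // ¬ pr i}) b => w j.1 b)]
    simp [hw]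
  have key : ∀ f : (ι → Bool) → ℝ≥0∞,
      ∑ ω : ι → Bool, (∏ i, w i (ω i)) * f ω
        = ∑ σ : {i // pr i} → Bool, ∑ τ : {i // ¬ pr i} → Bool,
            (A σ * B τ) * f (e (σ, τ)) := by
    intro f
    rw [← Equiv.sum_comp e (fun ω => (∏ i, w i (ω i)) * f ω), Fintype.sum_prod_type]
    exact Finset.sum_congr rfl fun σ _ => Finset.sum_congr rfl fun τ _ => by
      rw [hW]
  rw [key, key, key]
  have h1 : ∑ σ : {i // pr i} → Bool, ∑ τ : {i // ¬ pr i} → Bool,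
      (A σ * B τ) * (g (e (σ, τ)) * h (e (σ, τ)))
      = (∑ σ, A σ * G σ) * (∑ τ, B τ * H τ) := by
    rw [Finset.sum_mul_sum]
    refine Finset.sum_congr rfl fun σ _ => Finset.sum_congr rfl fun τ _ => ?_
    rw [hgτ, hhσ]
    ring
  have h2 : ∑ σ : {i // pr i} → Bool, ∑ τ : {i // ¬ pr i} → Bool,
      (A σ * B τ) * g (e (σ, τ)) = (∑ σ, A σ * G σ) := by
    have : ∀ σ : {i // pr i} → Bool, ∑ τ : {i // ¬ pr i} → Bool,
        (A σ * B τ) * g (e (σ, τ)) = (A σ * G σ) * ∑ τ, B τ := by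
      intro σ
      rw [Finset.mul_sum]
      refine Finset.sum_congr rfl fun τ _ => ?_
      rw [hgτ]; ring
    rw [Finset.sum_congr rfl fun σ _ => this σ]
    rw [hmassB]; simp
  have h3 : ∑ σ : {i // pr i} → Bool, ∑ τ : {i // ¬ pr i} → Bool,
      (A σ * B τ) * h (e (σ, τ)) = (∑ τ, B τ * H τ) := by
    have : ∀ σ : {i // pr i} → Bool, ∑ τ : {i // ¬ pr i} → Bool,
        (A σ * B τ) * h (e (σ, τ)) = A σ * ∑ τ, B τ * H τ := by
      intro σ
      rw [Finset.mul_sum]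
      refine Finset.sum_congr rfl fun τ _ => ?_
      rw [hhσ]; ring
    rw [Finset.sum_congr rfl fun σ _ => this σ, ← Finset.sum_mul, hmassA]; simp
  rw [h1, h2, h3]

variable {n : ℕ}

abbrev X (n : ℕ) := {e : Sym2 (Fin n) // ¬ e.IsDiag}

noncomputable def wt (p : ℝ) : Bool → ℝ≥0∞ :=
  fun b => bif b then ENNReal.ofReal p else ENNReal.ofReal (1 - p)

noncomputable def W (p : ℝ) (ω : X n → Bool) : ℝ≥0∞ := ∏ x, wt p (ω x)

noncomputable def m (p : ℝ) (A : (X n → Bool) → Prop) : ℝ≥0∞ :=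
  ∑ ω : X n → Bool, if A ω then W p ω else 0

noncomputable def c (p : ℝ) : ℕ → ℝ≥0∞
  | 0 => 0
  | j+1 => wt p true + wt p false * c p j

variable {p : ℝ}

lemma wt_sum (hp0 : 0 ≤ p) (hp1 : p ≤ 1) : wt p true + wt p false = 1 := by
  simp only [wt, cond_true, cond_false]
  rw [← ENNReal.ofReal_add hp0 (by linarith)]
  norm_num

lemma m_congr {A B : (X n → Bool) → Prop} (h : ∀ ω, A ω ↔ B ω) : m p A = m p B := by
  unfold m
  exact Finset.sum_congr rfl fun ω _ => if_congr (h ω) rfl rfl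

lemma m_mono {A B : (X n → Bool) → Prop} (h : ∀ ω, A ω → B ω) : m p A ≤ m p B := by
  unfold m
  refine Finset.sum_le_sum fun ω _ => ?_
  by_cases hA : A ω
  · rw [if_pos hA, if_pos (h ω hA)]
  · simp [hA]

lemma m_zero {A : (X n → Bool) → Prop} (h : ∀ ω, ¬ A ω) : m p A = 0 := by
  unfold m; simp [h]

lemma m_mass (hp0 : 0 ≤ p) (hp1 : p ≤ 1) : ∑ ω : X n → Bool, W p ω = 1 := by
  have := fubini (fun (_ : X n) (b : Bool) => wt p b)
  rw [wt_sum hp0 hp1] at this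
  simpa [W] using this

lemma m_le_one (hp0 : 0 ≤ p) (hp1 : p ≤ 1) (A : (X n → Bool) → Prop) : m p A ≤ 1 := by
  rw [← m_mass (n := n) hp0 hp1]
  unfold m
  refine Finset.sum_le_sum fun ω _ => ?_
  split <;> simp

lemma m_add_of_iff {A B C : (X n → Bool) → Prop}
    (h : ∀ ω, A ω ↔ (B ω ∨ C ω)) (hd : ∀ ω, ¬ (B ω ∧ C ω)) :
    m p A = m p B + m p C := by
  unfold m
  rw [← Finset.sum_add_distrib]
  refine Finset.sum_congr rfl fun ω _ => ?_
  by_cases hB : B ω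
  · rw [if_pos ((h ω).2 (Or.inl hB)), if_pos hB, if_neg (fun hC => hd ω ⟨hB, hC⟩), add_zero]
  · by_cases hC : C ω
    · rw [if_pos ((h ω).2 (Or.inr hC)), if_neg hB, if_pos hC, zero_add]
    · rw [if_neg (fun hA => (h ω).1 hA |>.elim hB hC), if_neg hB, if_neg hC, add_zero]

lemma m_split (hp0 : 0 ≤ p) (hp1 : p ≤ 1) (x₀ : X n) (b : Bool)
    (E : (X n → Bool) → Prop)
    (hE : ∀ ω cc, E (Function.update ω x₀ cc) ↔ E ω) :
    m p (fun ω => ω x₀ = b ∧ E ω) = wt p b * m p E := by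
  have hEinv : ∀ ω₁ ω₂ : X n → Bool, (∀ i, ¬ (i = x₀) → ω₁ i = ω₂ i) → (E ω₁ ↔ E ω₂) := by
    intro ω₁ ω₂ hagree
    have h2 : ω₂ = Function.update ω₁ x₀ (ω₂ x₀) := by
      funext i
      by_cases hi : i = x₀
      · subst hi; simp
      · rw [Function.update_of_ne hi]; exact (hagree i hi).symm
    rw [h2, hE]
  set g : (X n → Bool) → ℝ≥0∞ := fun ω => if ω x₀ = b then 1 else 0 with hg_def
  set h : (X n → Bool) → ℝ≥0∞ := fun ω => if E ω then 1 else 0 with hh_def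
  have hsplit := split (fun (_ : X n) => wt p) (fun _ => wt_sum hp0 hp1)
      (fun i => i = x₀) g h
      (fun ω₁ ω₂ hag => by simp only [hg_def]; rw [hag x₀ rfl])
      (fun ω₁ ω₂ hag => by simp only [hh_def]; rw [if_congr (hEinv ω₁ ω₂ hag) rfl rfl])
  have hLHS : m p (fun ω => ω x₀ = b ∧ E ω)
      = ∑ ω : X n → Bool, (∏ x, wt p (ω x)) * (g ω * h ω) := by
    unfold m
    refine Finset.sum_congr rfl fun ω _ => ?_
    by_cases h1 : ω x₀ = b <;> by_cases h2 : E ω <;>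
      simp [hg_def, hh_def, h1, h2, W]
  have hg_sum : ∑ ω : X n → Bool, (∏ x, wt p (ω x)) * g ω = wt p b := by
    have hpt : ∀ ω : X n → Bool, (∏ x, wt p (ω x)) * g ω
        = ∏ x, (if x = x₀ then (if ω x = b then wt p (ω x) else 0) else wt p (ω x)) := by
      intro ω
      by_cases h1 : ω x₀ = b
      · have : ∀ x : X n, (if x = x₀ then (if ω x = b then wt p (ω x) else 0) else wt p (ω x))
            = wt p (ω x) := by
          intro x
          by_cases hx : x = x₀
          · subst hx; simp [h1]
          · simp [hx]
        rw [Finset.prod_congr rfl fun x _ => this x]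
        simp [hg_def, h1]
      · have hz : (∏ x : X n, (if x = x₀ then (if ω x = b then wt p (ω x) else 0)
            else wt p (ω x))) = 0 :=
          Finset.prod_eq_zero (Finset.mem_univ x₀) (by simp [h1])
        rw [hz]
        simp [hg_def, h1]
    rw [Finset.sum_congr rfl fun ω _ => hpt ω]
    rw [fubini (fun x bb => if x = x₀ then (if bb = b then wt p bb else 0) else wt p bb)]
    rw [Finset.prod_eq_single x₀ (fun x _ hx => by simp [hx, wt_sum hp0 hp1])
      (fun hx => absurd (Finset.mem_univ x₀) hx)]
    cases b <;> simp [wt]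
  have hh_sum : ∑ ω : X n → Bool, (∏ x, wt p (ω x)) * h ω = m p E := by
    unfold m
    refine Finset.sum_congr rfl fun ω _ => ?_
    by_cases h2 : E ω <;> simp [hh_def, h2, W]
  rw [hLHS, hsplit, hg_sum, hh_sum]

def op (ω : X n → Bool) (a b : Fin n) : Prop :=
  ∃ h : ¬ (s(a, b) : Sym2 (Fin n)).IsDiag, ω ⟨s(a, b), h⟩ = true

def relO (Pr Sr R : Finset (Fin n)) (u : Fin n) (ω : X n → Bool) (a b : Fin n) : Prop :=
  b ∉ Sr ∧ a ∉ Pr ∧ (a = u → b ∈ R) ∧ op ω a b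

def ReachO (Pr Sr R : Finset (Fin n)) (u : Fin n) (ω : X n → Bool) : Prop :=
  ∀ v : Fin n, v ∉ Sr → ∃ s ∈ Sr, s ∉ Pr ∧ ReflTransGen (relO Pr Sr R u ω) s v

lemma avoid {α : Type*} {ρ : α → α → Prop} {s v v₀ : α} (hpath : ReflTransGen ρ s v) :
    v ≠ v₀ → (ReflTransGen (fun a b => ρ a b ∧ b ≠ v₀) s v ∨
      ReflTransGen (fun a b => ρ a b ∧ b ≠ v₀) v₀ v) := by
  induction hpath with
  | refl => intro _; exact Or.inl ReflTransGen.refl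
  | @tail w x hsw hwx ih =>
    intro hv
    by_cases hw : w = v₀
    · subst hw; exact Or.inr (ReflTransGen.single ⟨hwx, hv⟩)
    · rcases ih hw with h | h
      · exact Or.inl (h.tail ⟨hwx, hv⟩)
      · exact Or.inr (h.tail ⟨hwx, hv⟩)

lemma reflTransGen_congr {α : Type*} {ρ σ : α → α → Prop} (h : ∀ a b, ρ a b ↔ σ a b)
    {a b : α} : ReflTransGen ρ a b ↔ ReflTransGen σ a b :=
  ⟨fun hp => ReflTransGen.mono (fun x y hxy => (h x y).1 hxy) _ _ hp,
   fun hp => ReflTransGen.mono (fun x y hxy => (h x y).2 hxy) _ _ hp⟩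

lemma reachO_congr {Pr Sr R : Finset (Fin n)} {u : Fin n}
    {ω ω' : X n → Bool}
    (h : ∀ a b, relO Pr Sr R u ω a b ↔ relO Pr Sr R u ω' a b) :
    ReachO Pr Sr R u ω ↔ ReachO Pr Sr R u ω' := by
  unfold ReachO
  refine forall_congr' fun v => imp_congr Iff.rfl ?_
  refine exists_congr fun s => and_congr Iff.rfl (and_congr Iff.rfl ?_)
  exact reflTransGen_congr h

section C1

variable {Pr Sr R : Finset (Fin n)} {u v₀ : Fin n} {ω : X n → Bool}

lemma op_x₀ (hd : ¬ (s(u, v₀) : Sym2 (Fin n)).IsDiag) :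
    op ω u v₀ ↔ ω ⟨s(u, v₀), hd⟩ = true :=
  ⟨fun ⟨_, he⟩ => he, fun he => ⟨hd, he⟩⟩

lemma op_update {a b : Fin n} (hd : ¬ (s(u, v₀) : Sym2 (Fin n)).IsDiag) {bb : Bool}
    (hne : (s(a, b) : Sym2 (Fin n)) ≠ s(u, v₀)) :
    op (Function.update ω ⟨s(u, v₀), hd⟩ bb) a b ↔ op ω a b := by
  unfold op
  constructor
  · rintro ⟨h, he⟩
    refine ⟨h, ?_⟩
    rwa [Function.update_of_ne (fun hc => hne (congrArg Subtype.val hc))] at he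
  · rintro ⟨h, he⟩
    refine ⟨h, ?_⟩
    rwa [Function.update_of_ne (fun hc => hne (congrArg Subtype.val hc))]

-- invariance of E₁ under changing coordinate x₀
lemma E1_invariant (hd : ¬ (s(u, v₀) : Sym2 (Fin n)).IsDiag) (hu : u ∈ Sr)
    (ω : X n → Bool) (bb : Bool) :
    ReachO Pr (insert v₀ Sr) (R.erase v₀) u (Function.update ω ⟨s(u, v₀), hd⟩ bb) ↔
      ReachO Pr (insert v₀ Sr) (R.erase v₀) u ω := by
  refine reachO_congr fun a b => ?_
  by_cases hs : (s(a, b) : Sym2 (Fin n)) = s(u, v₀)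
  · rcases Sym2.eq_iff.1 hs with ⟨rfl, rfl⟩ | ⟨rfl, rfl⟩
    · constructor <;> rintro ⟨hb, -, -, -⟩ <;>
        exact absurd (Finset.mem_insert_self _ _) hb
    · constructor <;> rintro ⟨hb, -, -, -⟩ <;>
        exact absurd (Finset.mem_insert_of_mem hu) hb
  · simp only [relO, op_update hd hs]

lemma E2_invariant (hd : ¬ (s(u, v₀) : Sym2 (Fin n)).IsDiag) (hu : u ∈ Sr)
    (ω : X n → Bool) (bb : Bool) :
    ReachO Pr Sr (R.erase v₀) u (Function.update ω ⟨s(u, v₀), hd⟩ bb) ↔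
      ReachO Pr Sr (R.erase v₀) u ω := by
  refine reachO_congr fun a b => ?_
  by_cases hs : (s(a, b) : Sym2 (Fin n)) = s(u, v₀)
  · rcases Sym2.eq_iff.1 hs with ⟨rfl, rfl⟩ | ⟨rfl, rfl⟩
    · constructor <;> rintro ⟨hb, ha, hr, -⟩ <;>
        exact absurd (hr rfl) (Finset.notMem_erase _ _)
    · constructor <;> rintro ⟨hb, -, -, -⟩ <;> exact absurd hu hb
  · simp only [relO, op_update hd hs]

lemma reach_C1 (hd : ¬ (s(u, v₀) : Sym2 (Fin n)).IsDiag)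
    (hPS : Pr ⊆ Sr) (hu : u ∈ Sr) (hup : u ∉ Pr) (hR : R ⊆ univ \ Sr) (hv₀ : v₀ ∈ R) :
    ReachO Pr Sr R u ω ↔
      ((ω ⟨s(u, v₀), hd⟩ = true ∧ ReachO Pr (insert v₀ Sr) (R.erase v₀) u ω) ∨
       (ω ⟨s(u, v₀), hd⟩ = false ∧ ReachO Pr Sr (R.erase v₀) u ω)) := by
  have hv₀Sr : v₀ ∉ Sr := (Finset.mem_sdiff.1 (hR hv₀)).2
  have hv₀Pr : v₀ ∉ Pr := fun h => hv₀Sr (hPS h)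
  cases hb : ω ⟨s(u, v₀), hd⟩ with
  | true =>
    simp only [true_and, false_and, or_false, Bool.true_eq_false, false_and, or_false]
    constructor
    · -- forward: ReachO → E₁
      intro H v hv
      have hvSr : v ∉ Sr := fun h => hv (Finset.mem_insert_of_mem h)
      have hvv₀ : v ≠ v₀ := fun h => hv (h ▸ Finset.mem_insert_self _ _)
      obtain ⟨s, hsSr, hsPr, hpath⟩ := H v hvSr
      have hmono : ∀ a b : Fin n, (relO Pr Sr R u ω a b ∧ b ≠ v₀) →
          relO Pr (insert v₀ Sr) (R.erase v₀) u ω a b := by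
        rintro a b ⟨⟨hbSr, haPr, hru, hop⟩, hbv₀⟩
        exact ⟨fun h => (Finset.mem_insert.1 h).elim hbv₀ hbSr, haPr,
          fun h => Finset.mem_erase.2 ⟨hbv₀, hru h⟩, hop⟩
      rcases avoid hpath hvv₀ with h | h
      · exact ⟨s, Finset.mem_insert_of_mem hsSr, hsPr, ReflTransGen.mono hmono _ _ h⟩
      · exact ⟨v₀, Finset.mem_insert_self _ _, hv₀Pr, ReflTransGen.mono hmono _ _ h⟩
    · -- backward: E₁ → ReachO
      intro H v hv
      by_cases hvv₀ : v = v₀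
      · subst hvv₀
        exact ⟨u, hu, hup, ReflTransGen.single ⟨hv, hup, fun _ => hv₀, ⟨hd, hb⟩⟩⟩
      · have hv' : v ∉ insert v₀ Sr := by
          simp [Finset.mem_insert, hvv₀, hv]
        obtain ⟨s, hsSr, hsPr, hpath⟩ := H v hv'
        have hmono : ∀ a b : Fin n, relO Pr (insert v₀ Sr) (R.erase v₀) u ω a b →
            relO Pr Sr R u ω a b := by
          rintro a b ⟨hbSr, haPr, hru, hop⟩
          exact ⟨fun h => hbSr (Finset.mem_insert_of_mem h), haPr,
            fun h => Finset.mem_of_mem_erase (hru h), hop⟩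
        rcases Finset.mem_insert.1 hsSr with rfl | hsSr'
        · exact ⟨u, hu, hup,
            ReflTransGen.head ⟨hv₀Sr, hup, fun _ => hv₀, ⟨hd, hb⟩⟩ (ReflTransGen.mono hmono _ _ hpath)⟩
        · exact ⟨s, hsSr', hsPr, ReflTransGen.mono hmono _ _ hpath⟩
  | false =>
    simp only [Bool.false_eq_true, false_and, false_or, true_and]
    constructor
    · intro H v hv
      obtain ⟨s, hsSr, hsPr, hpath⟩ := H v hv
      refine ⟨s, hsSr, hsPr, ReflTransGen.mono ?_ _ _ hpath⟩
      rintro a b ⟨hbSr, haPr, hru, hop⟩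
      refine ⟨hbSr, haPr, fun h => Finset.mem_erase.2 ⟨?_, hru h⟩, hop⟩
      rintro rfl
      subst h
      exact absurd ((op_x₀ hd).1 hop) (by simp [hb])
    · intro H v hv
      obtain ⟨s, hsSr, hsPr, hpath⟩ := H v hv
      refine ⟨s, hsSr, hsPr, ReflTransGen.mono ?_ _ _ hpath⟩
      rintro a b ⟨hbSr, haPr, hru, hop⟩
      exact ⟨hbSr, haPr, fun h => Finset.mem_of_mem_erase (hru h), hop⟩

end C1

lemma reach_C2 {Pr Sr : Finset (Fin n)} {u u' : Fin n} {ω : X n → Bool}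
    (hu' : u' ∈ Sr) (hu'P : u' ∉ Pr) (hu'ne : u' ≠ u) (huP : u ∉ Pr) :
    ReachO Pr Sr ∅ u ω ↔ ReachO (insert u Pr) Sr (univ \ Sr) u' ω := by
  have hrel : ∀ a b : Fin n, relO Pr Sr ∅ u ω a b ↔
      relO (insert u Pr) Sr (univ \ Sr) u' ω a b := by
    intro a b
    constructor
    · rintro ⟨hbSr, haPr, hru, hop⟩
      have hau : a ≠ u := fun h => by simpa using hru h
      exact ⟨hbSr, by simp [Finset.mem_insert, hau, haPr], fun _ =>
        Finset.mem_sdiff.2 ⟨Finset.mem_univ _, hbSr⟩, hop⟩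
    · rintro ⟨hbSr, haPr, -, hop⟩
      rw [Finset.mem_insert] at haPr
      push_neg at haPr
      exact ⟨hbSr, haPr.2, fun h => absurd h haPr.1, hop⟩
  constructor
  · intro H v hv
    obtain ⟨s, hsSr, hsPr, hpath⟩ := H v hv
    have hsu : s ≠ u := by
      rintro rfl
      rcases hpath.cases_head with rfl | ⟨w, hw, -⟩
      · exact hv hsSr
      · simpa using hw.2.2.1 rfl
    exact ⟨s, hsSr, by simp [Finset.mem_insert, hsu, hsPr],
      ReflTransGen.mono (fun a b hab => (hrel a b).1 hab) _ _ hpath⟩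
  · intro H v hv
    obtain ⟨s, hsSr, hsPr, hpath⟩ := H v hv
    rw [Finset.mem_insert] at hsPr
    push_neg at hsPr
    exact ⟨s, hsSr, hsPr.2, ReflTransGen.mono (fun a b hab => (hrel a b).2 hab) _ _ hpath⟩

lemma reach_C3 {Pr Sr : Finset (Fin n)} {u v₁ : Fin n} {ω : X n → Bool}
    (hone : ∀ s ∈ Sr, s ∉ Pr → s = u) (hv₁ : v₁ ∉ Sr) :
    ¬ ReachO Pr Sr ∅ u ω := by
  intro H
  obtain ⟨s, hsSr, hsPr, hpath⟩ := H v₁ hv₁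
  have : s = u := hone s hsSr hsPr
  subst this
  rcases hpath.cases_head with rfl | ⟨w, hw, -⟩
  · exact hv₁ hsSr
  · simpa using hw.2.2.1 rfl

lemma conn_reach {ω : X n → Bool} (r : Fin n) (hconn : (erGraph n ω).Connected) :
    ReachO ∅ {r} (univ \ {r}) r ω := by
  intro v hv
  have hvr : v ≠ r := by simpa using hv
  have hreach : (erGraph n ω).Reachable r v := hconn.preconnected r v
  rw [SimpleGraph.reachable_iff_reflTransGen] at hreach
  have hmono : ∀ a b : Fin n, ((erGraph n ω).Adj a b ∧ b ≠ r) →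
      relO ∅ {r} (univ \ {r}) r ω a b := by
    rintro a b ⟨hadj, hbr⟩
    rw [erGraph, SimpleGraph.fromEdgeSet_adj] at hadj
    obtain ⟨⟨hd, hval⟩, hne⟩ := hadj
    exact ⟨by simpa using hbr, by simp, fun _ => Finset.mem_sdiff.2
      ⟨Finset.mem_univ _, by simpa using hbr⟩, ⟨hd, hval⟩⟩
  rcases avoid hreach hvr with h | h
  · exact ⟨r, Finset.mem_singleton_self r, Finset.notMem_empty r, ReflTransGen.mono hmono _ _ h⟩
  · exact ⟨r, Finset.mem_singleton_self r, Finset.notMem_empty r, ReflTransGen.mono hmono _ _ h⟩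


lemma c_succ {p : ℝ} (j : ℕ) : c p (j+1) = wt p true + wt p false * c p j := rfl

lemma c_eq {p : ℝ} (hp0 : 0 ≤ p) (hp1 : p ≤ 1) :
    ∀ j, c p j = ENNReal.ofReal (1 - (1-p)^j)
  | 0 => by simp [c]
  | (j+1) => by
    have hq0 : (0:ℝ) ≤ 1 - p := by linarith
    have hqj : (1-p)^j ≤ 1 := pow_le_one₀ hq0 (by linarith)
    have hqj0 : (0:ℝ) ≤ 1 - (1-p)^j := by linarith
    rw [c_succ, c_eq hp0 hp1 j]
    show ENNReal.ofReal p + ENNReal.ofReal (1-p) * ENNReal.ofReal (1 - (1-p)^j) = _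
    rw [← ENNReal.ofReal_mul hq0, ← ENNReal.ofReal_add hp0 (mul_nonneg hq0 hqj0)]
    congr 1
    ring

lemma main_bound {p : ℝ} (hp0 : 0 ≤ p) (hp1 : p ≤ 1) :
    ∀ (N : ℕ) (Pr Sr R : Finset (Fin n)) (u : Fin n),
      (univ \ Pr).card * (n+1) + R.card ≤ N → Pr ⊆ Sr → u ∈ Sr → u ∉ Pr →
      R ⊆ univ \ Sr →
      m p (ReachO Pr Sr R u) ≤
        c p (n - Pr.card - 1) ^ R.card * c p (n - Pr.card - 2) ^ ((univ \ Sr) \ R).card := by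
  intro N
  induction N with
  | zero =>
    intro Pr Sr R u hN hPS hu huP hR
    exfalso
    have hmem : u ∈ univ \ Pr := Finset.mem_sdiff.2 ⟨Finset.mem_univ _, huP⟩
    have h1 : 1 ≤ (univ \ Pr).card := Finset.card_pos.2 ⟨u, hmem⟩
    have h2 : n + 1 ≤ (univ \ Pr).card * (n+1) := Nat.le_mul_of_pos_left _ h1
    omega
  | succ N ih =>
    intro Pr Sr R u hN hPS hu huP hR
    by_cases hT : univ \ Sr = ∅
    · -- everything discovered
      have hR0 : R = ∅ := Finset.subset_empty.1 (hT ▸ hR)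
      subst hR0
      rw [hT]
      simp only [Finset.empty_sdiff, Finset.card_empty, pow_zero, mul_one, one_mul]
      exact m_le_one hp0 hp1 _
    · obtain ⟨v₁, hv₁⟩ := Finset.nonempty_iff_ne_empty.2 hT
      have hv₁Sr : v₁ ∉ Sr := (Finset.mem_sdiff.1 hv₁).2
      by_cases hRne : R = ∅
      · -- R exhausted: move u to processed
        subst hRne
        by_cases hex : ∃ s ∈ Sr, s ∉ Pr ∧ s ≠ u
        · obtain ⟨u', hu'S, hu'P, hu'ne⟩ := hex
          rw [m_congr (fun ω => reach_C2 hu'S hu'P hu'ne huP)]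
          have hins : u ∈ univ \ Pr := Finset.mem_sdiff.2 ⟨Finset.mem_univ _, huP⟩
          have hcard1 : (univ \ insert u Pr).card = (univ \ Pr).card - 1 := by
            have : univ \ insert u Pr = (univ \ Pr).erase u := by
              ext x
              simp only [Finset.mem_sdiff, Finset.mem_insert, Finset.mem_erase,
                Finset.mem_univ, true_and]
              tauto
            rw [this, Finset.card_erase_of_mem hins]
          have hsle : (univ \ Sr).card ≤ n := by
            calc (univ \ Sr).card ≤ (univ : Finset (Fin n)).card :=
                  Finset.card_le_card (Finset.sdiff_subset)
            _ = n := by rw [Finset.card_univ, Fintype.card_fin]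
          have hk1 : 1 ≤ (univ \ Pr).card := Finset.card_pos.2 ⟨u, hins⟩
          have hmeas : (univ \ insert u Pr).card * (n+1) + (univ \ Sr).card ≤ N := by
            rw [hcard1, Nat.sub_one_mul]
            have hb1 : (univ \ Pr).card * (n+1) ≤ N + 1 := by
              simpa using hN
            have hb2 : n + 1 ≤ (univ \ Pr).card * (n+1) := Nat.le_mul_of_pos_left _ hk1
            generalize (univ \ Pr).card * (n+1) = b at hb1 hb2 ⊢
            omega
          refine le_trans (ih (insert u Pr) Sr (univ \ Sr) u' hmeas
            (Finset.insert_subset hu hPS) hu'S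
            (by simp [Finset.mem_insert, hu'ne, hu'P]) le_rfl) ?_
          rw [Finset.card_insert_of_notMem huP]
          have hi1 : n - (Pr.card + 1) - 1 = n - Pr.card - 2 := by omega
          rw [hi1, Finset.sdiff_self, Finset.card_empty, pow_zero, mul_one,
            Finset.sdiff_empty]
          simp
        · -- no further start vertices: event impossible
          push_neg at hex
          have hone : ∀ s ∈ Sr, s ∉ Pr → s = u := by
            intro s hs hsp
            by_contra hne
            exact hne (hex s hs hsp)
          rw [m_zero (fun ω => reach_C3 hone hv₁Sr)]
          exact zero_le'
      · -- query edge u - v₀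
        obtain ⟨v₀, hv₀⟩ := Finset.nonempty_iff_ne_empty.2 hRne
        have hv₀S : v₀ ∈ univ \ Sr := hR hv₀
        have hv₀Sr : v₀ ∉ Sr := (Finset.mem_sdiff.1 hv₀S).2
        have hune : u ≠ v₀ := fun h => hv₀Sr (h ▸ hu)
        have hd : ¬ (s(u, v₀) : Sym2 (Fin n)).IsDiag := by
          rw [Sym2.mk_isDiag_iff]; exact hune
        -- split the measure
        have hdecomp : m p (ReachO Pr Sr R u) =
            m p (fun ω => ω ⟨s(u,v₀), hd⟩ = true ∧
              ReachO Pr (insert v₀ Sr) (R.erase v₀) u ω) +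
            m p (fun ω => ω ⟨s(u,v₀), hd⟩ = false ∧
              ReachO Pr Sr (R.erase v₀) u ω) := by
          refine m_add_of_iff (fun ω => reach_C1 hd hPS hu huP hR hv₀) (fun ω h => ?_)
          rw [h.1.1] at h
          exact absurd h.2.1 (by simp)
        rw [hdecomp,
          m_split hp0 hp1 _ true _ (fun ω bb => E1_invariant hd hu ω bb),
          m_split hp0 hp1 _ false _ (fun ω bb => E2_invariant hd hu ω bb)]
        -- apply IH to both branches
        have hrpos : 1 ≤ R.card := Finset.card_pos.2 ⟨v₀, hv₀⟩
        have hcardE : (R.erase v₀).card = R.card - 1 := Finset.card_erase_of_mem hv₀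
        have hmeas : (univ \ Pr).card * (n+1) + (R.erase v₀).card ≤ N := by
          rw [hcardE]; omega
        have hRsub1 : R.erase v₀ ⊆ univ \ insert v₀ Sr := by
          intro b hb
          rw [Finset.mem_erase] at hb
          have := Finset.mem_sdiff.1 (hR hb.2)
          simp [Finset.mem_insert, hb.1, this.2]
        have hRsub2 : R.erase v₀ ⊆ univ \ Sr :=
          fun b hb => hR (Finset.mem_of_mem_erase hb)
        have hsetA : (univ \ insert v₀ Sr) \ (R.erase v₀) = (univ \ Sr) \ R := by
          ext x
          by_cases hx : x = v₀
          · subst hx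
            simp [Finset.mem_sdiff, hv₀]
          · simp only [Finset.mem_sdiff, Finset.mem_insert, Finset.mem_erase,
              Finset.mem_univ, true_and, hx]
            tauto
        have hsetB : (univ \ Sr) \ (R.erase v₀) = insert v₀ ((univ \ Sr) \ R) := by
          ext x
          by_cases hx : x = v₀
          · subst hx
            simp [Finset.mem_sdiff, hv₀Sr]
          · simp only [Finset.mem_sdiff, Finset.mem_insert, Finset.mem_erase,
              Finset.mem_univ, true_and, hx, false_or]
            tauto
        have hcardB : ((univ \ Sr) \ (R.erase v₀)).card = ((univ \ Sr) \ R).card + 1 := by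
          rw [hsetB, Finset.card_insert_of_notMem (by simp [hv₀])]
        have hIH1 := ih Pr (insert v₀ Sr) (R.erase v₀) u hmeas
          (hPS.trans (Finset.subset_insert _ _)) (Finset.mem_insert_of_mem hu) huP hRsub1
        have hIH2 := ih Pr Sr (R.erase v₀) u hmeas hPS hu huP hRsub2
        rw [hcardE, hsetA] at hIH1
        rw [hcardE, hcardB] at hIH2
        -- index arithmetic
        have h1 : Pr.card < Sr.card :=
          Finset.card_lt_card ((Finset.ssubset_iff_of_subset hPS).2 ⟨u, hu, huP⟩)
        have h2 : Sr.card < n := by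
          have := Finset.card_lt_card
            ((Finset.ssubset_iff_of_subset (Finset.subset_univ Sr)).2
              ⟨v₁, Finset.mem_univ _, hv₁Sr⟩)
          rwa [Finset.card_univ, Fintype.card_fin] at this
        have hj : n - Pr.card - 2 + 1 = n - Pr.card - 1 := by omega
        calc wt p true * m p (ReachO Pr (insert v₀ Sr) (R.erase v₀) u)
              + wt p false * m p (ReachO Pr Sr (R.erase v₀) u)
            ≤ wt p true * (c p (n - Pr.card - 1) ^ (R.card - 1)
                * c p (n - Pr.card - 2) ^ ((univ \ Sr) \ R).card)
              + wt p false * (c p (n - Pr.card - 1) ^ (R.card - 1)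
                * c p (n - Pr.card - 2) ^ (((univ \ Sr) \ R).card + 1)) := by
              gcongr
          _ = (c p (n - Pr.card - 1) ^ (R.card - 1)
                * c p (n - Pr.card - 2) ^ ((univ \ Sr) \ R).card)
              * (wt p true + wt p false * c p (n - Pr.card - 2)) := by
              rw [pow_succ]
              ring
          _ = c p (n - Pr.card - 1) ^ R.card
                * c p (n - Pr.card - 2) ^ ((univ \ Sr) \ R).card := by
              rw [← c_succ, hj]
              have : c p (n - Pr.card - 1) ^ (R.card - 1) * c p (n - Pr.card - 1)
                  = c p (n - Pr.card - 1) ^ R.card := by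
                rw [← pow_succ]
                congr 1
                omega
              rw [mul_comm (_ ^ (R.card - 1) * _), ← mul_assoc, mul_comm (c p (n - Pr.card - 1)), this]
          _ ≤ _ := le_refl _

-- measure-theoretic glue

instance bern_finite (p : ℝ) : IsFiniteMeasure (bern p) := by
  constructor
  have hb : bern p Set.univ = ENNReal.ofReal p + ENNReal.ofReal (1-p) := by
    simp [bern]
  rw [hb]
  exact ENNReal.add_lt_top.2 ⟨ENNReal.ofReal_lt_top, ENNReal.ofReal_lt_top⟩

lemma bern_singleton (p : ℝ) (b : Bool) : bern p {b} = wt p b := by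
  cases b <;> simp [bern, wt, Measure.dirac_apply]

lemma meas_all {S : Set (X n → Bool)} : MeasurableSet S :=
  (Set.to_countable S).measurableSet

lemma erMeasure_singleton (p : ℝ) (ω : X n → Bool) : erMeasure n p {ω} = W p ω := by
  have h1 : ({ω} : Set (X n → Bool)) = Set.univ.pi (fun x => {ω x}) := by
    ext ω'
    simp [Set.mem_pi, funext_iff]
  rw [erMeasure, h1, MeasureTheory.Measure.pi_pi]
  exact Finset.prod_congr rfl fun x _ => bern_singleton p (ω x)

lemma erMeasure_eq_m (p : ℝ) (S : Set (X n → Bool)) :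
    erMeasure n p S = m p (fun ω => ω ∈ S) := by
  have hS : S = ⋃ ω ∈ (univ.filter (fun ω => ω ∈ S) : Finset (X n → Bool)),
      ({ω} : Set (X n → Bool)) := by
    ext ω
    simp
  have hdisj : (↑(univ.filter (fun ω => ω ∈ S) : Finset (X n → Bool)) :
      Set (X n → Bool)).PairwiseDisjoint (fun ω => ({ω} : Set (X n → Bool))) := by
    intro a _ b _ hab
    simp only [Function.onFun, Set.disjoint_singleton_left, Set.mem_singleton_iff]
    exact hab
  have key : erMeasure n p S
      = ∑ ω ∈ univ.filter (fun ω => ω ∈ S), erMeasure n p {ω} := by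
    conv_lhs => rw [hS]
    exact measure_biUnion_finset hdisj (fun _ _ => meas_all)
  rw [key]
  unfold m
  rw [Finset.sum_filter]
  refine Finset.sum_congr rfl fun ω _ => ?_
  split
  · exact erMeasure_singleton p ω
  · rfl

end ER

theorem connected_upper_bound (n : ℕ) (hn : 2 ≤ n) (p : ℝ) (hp0 : 0 ≤ p) (hp1 : p ≤ 1) :
    erMeasure n p {ω | (erGraph n ω).Connected} ≤
    ENNReal.ofReal ((1 - (1 - p) ^ (n - 1)) ^ (n - 1)) := by
  classical
  have hr : (0 : ℕ) < n := by omega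
  set r : Fin n := ⟨0, hr⟩ with hrdef
  rw [ER.erMeasure_eq_m]
  refine le_trans (ER.m_mono (fun ω hconn => ER.conn_reach r hconn)) ?_
  refine le_trans (ER.main_bound hp0 hp1
    ((Finset.univ \ (∅ : Finset (Fin n))).card * (n+1) +
      (Finset.univ \ ({r} : Finset (Fin n))).card)
    ∅ {r} (Finset.univ \ {r}) r le_rfl (by simp) (Finset.mem_singleton_self r)
    (Finset.notMem_empty r) le_rfl) ?_
  have hcard : (Finset.univ \ ({r} : Finset (Fin n))).card = n - 1 := by
    rw [Finset.card_sdiff_of_subset (Finset.subset_univ _)]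
    simp [Finset.card_univ]
  rw [Finset.sdiff_self, Finset.card_empty, pow_zero, mul_one, hcard]
  have hq0 : (0:ℝ) ≤ 1 - p := by linarith
  have hnn : (0:ℝ) ≤ 1 - (1-p)^(n-1) := by
    have := pow_le_one₀ hq0 (by linarith : 1 - p ≤ 1) (n := n-1)
    linarith
  rw [ER.c_eq hp0 hp1]
  have h01 : n - 0 - 1 = n - 1 := by omega
  rw [h01, ← ENNReal.ofReal_pow hnn]
end

section
/- Consider the random directed graph on vertices {1,...,n} where for each ordered pair (k,l) with k ≠ l, the directed edge from k to l is present independently with probability p_{kl}, where p_{kl} = p_{lk}. Let G be the event that for every vertex w there is a directed path from w to vertex 1. Consider also the random undirected graph on {1,...,n} where edge {k,l} is present independently with probability p_{kl}, and let K be the event that this graph is connected. Then P(K) = P(G). -/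
open MeasureTheory

/-- The random directed graph: each ordered pair (k,l), k ≠ l, carries an independent
Bernoulli(q k l) edge. -/
noncomputable def dirMeasure (n : ℕ) (q : Fin n → Fin n → ℝ) :
    Measure ({e : Fin n × Fin n // e.1 ≠ e.2} → Bool) :=
  Measure.pi fun e => bern (q e.1.1 e.1.2)

/-- The random undirected graph: each unordered pair {k,l}, k ≠ l, carries an independent
Bernoulli(q k l) edge (well-defined since q is symmetric). -/
noncomputable def undirMeasure (n : ℕ) (q : Fin n → Fin n → ℝ)
    (hsymm : ∀ k l, q k l = q l k) :
    Measure ({e : Sym2 (Fin n) // ¬ e.IsDiag} → Bool) :=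
  Measure.pi fun e => bern (Sym2.lift ⟨q, fun k l => hsymm k l⟩ e.1)

def undirGraph (n : ℕ) (ω : {e : Sym2 (Fin n) // ¬ e.IsDiag} → Bool) : SimpleGraph (Fin n) :=
  SimpleGraph.fromEdgeSet {e : Sym2 (Fin n) | ∃ h : ¬ e.IsDiag, ω ⟨e, h⟩ = true}

/-- Directed adjacency: there is an occupied directed edge from `a` to `b`. -/
def dirAdj (n : ℕ) (ω : {e : Fin n × Fin n // e.1 ≠ e.2} → Bool) (a b : Fin n) : Prop :=
  ∃ h : a ≠ b, ω ⟨(a, b), h⟩ = true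


open MeasureTheory
open scoped NNReal ENNReal


namespace CEG

open Classical in
noncomputable def ind (P : Prop) : ℝ≥0 := if P then 1 else 0

lemma ind_true {P : Prop} (h : P) : ind P = 1 := by simp [ind, h]
lemma ind_false {P : Prop} (h : ¬ P) : ind P = 0 := by simp [ind, h]
lemma ind_congr {P Q : Prop} (h : P ↔ Q) : ind P = ind Q := by
  by_cases hp : P
  · rw [ind_true hp, ind_true (h.mp hp)]
  · rw [ind_false hp, ind_false fun hq => hp (h.mpr hq)]

noncomputable def wt (x : ℝ) : Bool → ℝ≥0
  | true => x.toNNReal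
  | false => (1 - x).toNNReal

lemma wt_sum {x : ℝ} (h0 : 0 ≤ x) (h1 : x ≤ 1) : wt x true + wt x false = 1 := by
  show x.toNNReal + (1 - x).toNNReal = 1
  rw [← Real.toNNReal_add h0 (by linarith)]
  norm_num

section Generic
variable {ι : Type*} [Fintype ι] [DecidableEq ι]

lemma sum_prod_eq_prod_sum (v : ι → Bool → ℝ≥0) :
    ∑ ω : ι → Bool, ∏ i, v i (ω i) = ∏ i, (v i true + v i false) := by
  have h : ∀ i, v i true + v i false = ∑ b : Bool, v i b := fun i => by
    simp [Fintype.sum_bool]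
  simp_rw [h]
  rw [Fintype.prod_sum]

variable (w : ι → Bool → ℝ≥0)

lemma sum_prod_w (hw : ∀ i, w i true + w i false = 1) : ∑ ω : ι → Bool, ∏ i, w i (ω i) = 1 := by
  rw [sum_prod_eq_prod_sum]
  simp [hw]

lemma sum_forced (hw : ∀ i, w i true + w i false = 1) (F : Finset ι) :
    ∑ ω : ι → Bool, ind (∀ i ∈ F, ω i = false) * ∏ i, w i (ω i)
      = ∏ i ∈ F, w i false := by
  classical
  set v : ι → Bool → ℝ≥0 := fun i b =>
    if i ∈ F then (if b = false then w i false else 0) else w i b with hv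
  have key : ∀ ω : ι → Bool,
      ind (∀ i ∈ F, ω i = false) * ∏ i, w i (ω i) = ∏ i, v i (ω i) := by
    intro ω
    by_cases h : ∀ i ∈ F, ω i = false
    · rw [ind_true h, one_mul]
      refine Finset.prod_congr rfl fun i _ => ?_
      by_cases hi : i ∈ F
      · simp [hv, hi, h i hi]
      · simp [hv, hi]
    · rw [ind_false h, zero_mul]
      push_neg at h
      obtain ⟨i₀, hi₀, hω⟩ := h
      refine (Finset.prod_eq_zero (Finset.mem_univ i₀) ?_).symm
      simp [hv, hi₀, hω]
  simp_rw [key]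
  rw [sum_prod_eq_prod_sum]
  have : ∀ i, v i true + v i false = if i ∈ F then w i false else 1 := by
    intro i
    by_cases hi : i ∈ F
    · simp [hv, hi]
    · simp [hv, hi, hw i]
  simp_rw [this]
  rw [Finset.prod_ite_mem, Finset.univ_inter]

lemma sum_ind_split (hw : ∀ i, w i true + w i false = 1) (s : Finset ι) (P Q : (ι → Bool) → Prop)
    (hP : ∀ ω ω' : ι → Bool, (∀ i ∈ s, ω i = ω' i) → P ω → P ω')
    (hQ : ∀ ω ω' : ι → Bool, (∀ i ∉ s, ω i = ω' i) → Q ω → Q ω') :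
    ∑ ω : ι → Bool, ind (P ω ∧ Q ω) * ∏ i, w i (ω i)
      = (∑ ω : ι → Bool, ind (P ω) * ∏ i, w i (ω i)) *
        (∑ ω : ι → Bool, ind (Q ω) * ∏ i, w i (ω i)) := by
  classical
  set m : (ι → Bool) → (ι → Bool) → (ι → Bool) := fun a b i => if i ∈ s then a i else b i with hm
  have hinv : Function.Involutive
      (fun p : (ι → Bool) × (ι → Bool) => (m p.1 p.2, m p.2 p.1)) := by
    rintro ⟨a, b⟩
    refine Prod.ext (funext fun i => ?_) (funext fun i => ?_) <;>
      · by_cases h : i ∈ s <;> simp [hm, h]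
  have hW : ∀ a b : ι → Bool,
      (∏ i, w i (m a b i)) * ∏ i, w i (m b a i) = (∏ i, w i (a i)) * ∏ i, w i (b i) := by
    intro a b
    rw [← Finset.prod_mul_distrib, ← Finset.prod_mul_distrib]
    refine Finset.prod_congr rfl fun i _ => ?_
    by_cases h : i ∈ s <;> simp [hm, h, mul_comm]
  have key : ∀ p : (ι → Bool) × (ι → Bool),
      (ind (P (m p.1 p.2)) * ∏ i, w i (m p.1 p.2 i)) *
        (ind (Q (m p.2 p.1)) * ∏ i, w i (m p.2 p.1 i))
      = (ind (P p.1 ∧ Q p.1) * ∏ i, w i (p.1 i)) * ∏ i, w i (p.2 i) := by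
    rintro ⟨a, b⟩
    have hPa : P (m a b) ↔ P a :=
      ⟨hP _ _ fun i hi => by simp [hm, hi], hP _ _ fun i hi => by simp [hm, hi]⟩
    have hQa : Q (m b a) ↔ Q a :=
      ⟨hQ _ _ fun i hi => by simp [hm, hi], hQ _ _ fun i hi => by simp [hm, hi]⟩
    have hind : ind (P a ∧ Q a) = ind (P a) * ind (Q a) := by
      by_cases h1 : P a <;> by_cases h2 : Q a <;> simp [ind, h1, h2]
    calc (ind (P (m a b)) * ∏ i, w i (m a b i)) * (ind (Q (m b a)) * ∏ i, w i (m b a i))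
        = (ind (P a) * ind (Q a)) * ((∏ i, w i (m a b i)) * ∏ i, w i (m b a i)) := by
          rw [ind_congr hPa, ind_congr hQa]; ring
      _ = (ind (P a ∧ Q a) * ∏ i, w i (a i)) * ∏ i, w i (b i) := by
          rw [hW, hind]; ring
  set e : Equiv.Perm ((ι → Bool) × (ι → Bool)) :=
    Function.Involutive.toPerm (fun p => (m p.1 p.2, m p.2 p.1)) hinv with he
  have hep : ∀ p : (ι → Bool) × (ι → Bool), e p = (m p.1 p.2, m p.2 p.1) := fun p => rfl
  calc ∑ ω : ι → Bool, ind (P ω ∧ Q ω) * ∏ i, w i (ω i)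
      = ∑ p : (ι → Bool) × (ι → Bool),
          (ind (P p.1 ∧ Q p.1) * ∏ i, w i (p.1 i)) * ∏ i, w i (p.2 i) := by
        rw [Fintype.sum_prod_type]
        dsimp only
        simp_rw [← Finset.mul_sum, sum_prod_w w hw, mul_one]
    _ = ∑ p : (ι → Bool) × (ι → Bool),
          (ind (P (e p).1) * ∏ i, w i ((e p).1 i)) *
            (ind (Q (e p).2) * ∏ i, w i ((e p).2 i)) := by
        refine Finset.sum_congr rfl fun p _ => ?_
        rw [hep p]
        exact (key p).symm
    _ = ∑ p : (ι → Bool) × (ι → Bool),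
          (ind (P p.1) * ∏ i, w i (p.1 i)) * (ind (Q p.2) * ∏ i, w i (p.2 i)) :=
        Equiv.sum_comp e (fun p : (ι → Bool) × (ι → Bool) =>
          (ind (P p.1) * ∏ i, w i (p.1 i)) * (ind (Q p.2) * ∏ i, w i (p.2 i)))
    _ = (∑ ω : ι → Bool, ind (P ω) * ∏ i, w i (ω i)) *
        (∑ ω : ι → Bool, ind (Q ω) * ∏ i, w i (ω i)) := by
        rw [Fintype.sum_prod_type]
        dsimp only
        rw [← Finset.sum_mul_sum]

end Generic
section Main

abbrev DE (n : ℕ) := {e : Fin n × Fin n // e.1 ≠ e.2}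
abbrev UE (n : ℕ) := {e : Sym2 (Fin n) // ¬ e.IsDiag}

variable {n : ℕ}

noncomputable def wD (q : Fin n → Fin n → ℝ) : DE n → Bool → ℝ≥0 :=
  fun e => wt (q e.1.1 e.1.2)

noncomputable def wU (q : Fin n → Fin n → ℝ) (hsymm : ∀ k l, q k l = q l k) :
    UE n → Bool → ℝ≥0 :=
  fun e => wt (Sym2.lift ⟨q, fun k l => hsymm k l⟩ e.1)

def dAdjOn (S : Finset (Fin n)) (ω : DE n → Bool) (a b : Fin n) : Prop :=
  a ∈ S ∧ b ∈ S ∧ dirAdj n ω a b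

def uAdj (η : UE n → Bool) (a b : Fin n) : Prop :=
  ∃ h : a ≠ b, η ⟨s(a, b), by rw [Sym2.mk_isDiag_iff]; exact h⟩ = true

def uAdjOn (S : Finset (Fin n)) (η : UE n → Bool) (a b : Fin n) : Prop :=
  a ∈ S ∧ b ∈ S ∧ uAdj η a b

def grdOn (S : Finset (Fin n)) (r : Fin n) (ω : DE n → Bool) : Prop :=
  ∀ v ∈ S, Relation.ReflTransGen (dAdjOn S ω) v r

def connOn (S : Finset (Fin n)) (r : Fin n) (η : UE n → Bool) : Prop :=
  ∀ v ∈ S, Relation.ReflTransGen (uAdjOn S η) v r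

open Classical in
noncomputable def RsetD (S : Finset (Fin n)) (r : Fin n) (ω : DE n → Bool) : Finset (Fin n) :=
  S.filter (fun v => Relation.ReflTransGen (dAdjOn S ω) v r)

open Classical in
noncomputable def RsetU (S : Finset (Fin n)) (r : Fin n) (η : UE n → Bool) : Finset (Fin n) :=
  S.filter (fun v => Relation.ReflTransGen (uAdjOn S η) v r)

lemma mem_RsetD {S : Finset (Fin n)} {r v : Fin n} {ω : DE n → Bool} :
    v ∈ RsetD S r ω ↔ v ∈ S ∧ Relation.ReflTransGen (dAdjOn S ω) v r := by
  classical
  simp [RsetD]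

lemma mem_RsetU {S : Finset (Fin n)} {r v : Fin n} {η : UE n → Bool} :
    v ∈ RsetU S r η ↔ v ∈ S ∧ Relation.ReflTransGen (uAdjOn S η) v r := by
  classical
  simp [RsetU]

open Classical in
noncomputable def cutD (S T : Finset (Fin n)) : Finset (DE n) :=
  Finset.univ.filter (fun e => e.1.1 ∈ S ∧ e.1.1 ∉ T ∧ e.1.2 ∈ T)

open Classical in
noncomputable def cutU (S T : Finset (Fin n)) : Finset (UE n) :=
  Finset.univ.filter (fun e => ∃ a b : Fin n, e.1 = s(a, b) ∧ a ∈ S ∧ a ∉ T ∧ b ∈ T)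

open Classical in
noncomputable def ED (T : Finset (Fin n)) : Finset (DE n) :=
  Finset.univ.filter (fun e => e.1.1 ∈ T ∧ e.1.2 ∈ T)

open Classical in
noncomputable def EU (T : Finset (Fin n)) : Finset (UE n) :=
  Finset.univ.filter (fun e => ∀ a ∈ e.1, a ∈ T)

lemma mem_cutD {S T : Finset (Fin n)} {e : DE n} :
    e ∈ cutD S T ↔ e.1.1 ∈ S ∧ e.1.1 ∉ T ∧ e.1.2 ∈ T := by classical simp [cutD]

lemma mem_cutU {S T : Finset (Fin n)} {e : UE n} :
    e ∈ cutU S T ↔ ∃ a b : Fin n, e.1 = s(a, b) ∧ a ∈ S ∧ a ∉ T ∧ b ∈ T := by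
  classical simp [cutU]

lemma mem_ED {T : Finset (Fin n)} {e : DE n} :
    e ∈ ED T ↔ e.1.1 ∈ T ∧ e.1.2 ∈ T := by classical simp [ED]

lemma mem_EU {T : Finset (Fin n)} {e : UE n} :
    e ∈ EU T ↔ ∀ a ∈ e.1, a ∈ T := by classical simp [EU]

lemma reach_upgradeD {S : Finset (Fin n)} {r : Fin n} {ω : DE n → Bool} :
    ∀ {v : Fin n}, Relation.ReflTransGen (dAdjOn S ω) v r →
      Relation.ReflTransGen (dAdjOn (RsetD S r ω) ω) v r := by
  intro v h
  induction h using Relation.ReflTransGen.head_induction_on with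
  | refl => exact .refl
  | head hac hcr ih =>
    exact Relation.ReflTransGen.head
      ⟨mem_RsetD.mpr ⟨hac.1, .head hac hcr⟩, mem_RsetD.mpr ⟨hac.2.1, hcr⟩, hac.2.2⟩ ih

lemma reach_upgradeU {S : Finset (Fin n)} {r : Fin n} {η : UE n → Bool} :
    ∀ {v : Fin n}, Relation.ReflTransGen (uAdjOn S η) v r →
      Relation.ReflTransGen (uAdjOn (RsetU S r η) η) v r := by
  intro v h
  induction h using Relation.ReflTransGen.head_induction_on with
  | refl => exact .refl
  | head hac hcr ih =>
    exact Relation.ReflTransGen.head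
      ⟨mem_RsetU.mpr ⟨hac.1, .head hac hcr⟩, mem_RsetU.mpr ⟨hac.2.1, hcr⟩, hac.2.2⟩ ih

lemma rsetD_eq_iff {S T : Finset (Fin n)} {r : Fin n} (hr : r ∈ T) (hTS : T ⊆ S)
    (ω : DE n → Bool) :
    RsetD S r ω = T ↔ (grdOn T r ω ∧ ∀ e ∈ cutD S T, ω e = false) := by
  constructor
  · intro h
    refine ⟨fun v hv => ?_, fun e he => ?_⟩
    · have hv' : v ∈ RsetD S r ω := h ▸ hv
      have h2 := reach_upgradeD (mem_RsetD.mp hv').2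
      rw [h] at h2
      exact h2
    · obtain ⟨h1, h2, h3⟩ := mem_cutD.mp he
      by_contra hω
      have hωt : ω e = true := by simpa using hω
      have hadj : dirAdj n ω e.1.1 e.1.2 := ⟨e.2, hωt⟩
      have hreach : Relation.ReflTransGen (dAdjOn S ω) e.1.2 r :=
        (mem_RsetD.mp (h.symm ▸ h3)).2
      have hmem : e.1.1 ∈ RsetD S r ω :=
        mem_RsetD.mpr ⟨h1, .head ⟨h1, hTS h3, hadj⟩ hreach⟩
      rw [h] at hmem
      exact h2 hmem
  · rintro ⟨hg, hcut⟩
    ext v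
    rw [mem_RsetD]
    constructor
    · rintro ⟨hvS, hreach⟩
      clear hvS
      induction hreach using Relation.ReflTransGen.head_induction_on with
      | refl => exact hr
      | @head a c hac hcr ih =>
        by_contra ha
        obtain ⟨hne, hωt⟩ := hac.2.2
        have := hcut ⟨(a, c), hne⟩ (mem_cutD.mpr ⟨hac.1, ha, ih⟩)
        rw [hωt] at this
        simp at this
    · intro hvT
      exact ⟨hTS hvT,
        Relation.ReflTransGen.mono (fun a b hab => ⟨hTS hab.1, hTS hab.2.1, hab.2.2⟩) _ _ (hg v hvT)⟩

lemma rsetU_eq_iff {S T : Finset (Fin n)} {r : Fin n} (hr : r ∈ T) (hTS : T ⊆ S)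
    (η : UE n → Bool) :
    RsetU S r η = T ↔ (connOn T r η ∧ ∀ e ∈ cutU S T, η e = false) := by
  constructor
  · intro h
    refine ⟨fun v hv => ?_, fun e he => ?_⟩
    · have hv' : v ∈ RsetU S r η := h ▸ hv
      have h2 := reach_upgradeU (mem_RsetU.mp hv').2
      rw [h] at h2
      exact h2
    · obtain ⟨a, b, hab, h1, h2, h3⟩ := mem_cutU.mp he
      by_contra hη
      have hηt : η e = true := by simpa using hη
      have hne : a ≠ b := fun hc => h2 (hc ▸ h3)
      have hadj : uAdj η a b := ⟨hne, by
        have : (⟨s(a, b), by rw [Sym2.mk_isDiag_iff]; exact hne⟩ : UE n) = e :=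
          Subtype.ext hab.symm
        rw [this]; exact hηt⟩
      have hreach : Relation.ReflTransGen (uAdjOn S η) b r :=
        (mem_RsetU.mp (h.symm ▸ h3)).2
      have hmem : a ∈ RsetU S r η :=
        mem_RsetU.mpr ⟨h1, .head ⟨h1, hTS h3, hadj⟩ hreach⟩
      rw [h] at hmem
      exact h2 hmem
  · rintro ⟨hg, hcut⟩
    ext v
    rw [mem_RsetU]
    constructor
    · rintro ⟨hvS, hreach⟩
      clear hvS
      induction hreach using Relation.ReflTransGen.head_induction_on with
      | refl => exact hr
      | @head a c hac hcr ih =>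
        by_contra ha
        obtain ⟨hne, hηt⟩ := hac.2.2
        have hmem : (⟨s(a, c), by rw [Sym2.mk_isDiag_iff]; exact hne⟩ : UE n) ∈ cutU S T :=
          mem_cutU.mpr ⟨a, c, rfl, hac.1, ha, ih⟩
        have := hcut _ hmem
        rw [hηt] at this
        simp at this
    · intro hvT
      exact ⟨hTS hvT,
        Relation.ReflTransGen.mono (fun a b hab => ⟨hTS hab.1, hTS hab.2.1, hab.2.2⟩) _ _ (hg v hvT)⟩


lemma grdOn_dep {T : Finset (Fin n)} {r : Fin n} {ω ω' : DE n → Bool}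
    (hagree : ∀ e ∈ ED T, ω e = ω' e) (h : grdOn T r ω) : grdOn T r ω' := by
  intro v hv
  refine Relation.ReflTransGen.mono (fun a b hab => ?_) _ _ (h v hv)
  obtain ⟨ha, hb, hne, hω⟩ := hab
  exact ⟨ha, hb, hne, by rw [← hagree ⟨(a, b), hne⟩ (mem_ED.mpr ⟨ha, hb⟩)]; exact hω⟩

lemma connOn_dep {T : Finset (Fin n)} {r : Fin n} {η η' : UE n → Bool}
    (hagree : ∀ e ∈ EU T, η e = η' e) (h : connOn T r η) : connOn T r η' := by
  intro v hv
  refine Relation.ReflTransGen.mono (fun a b hab => ?_) _ _ (h v hv)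
  obtain ⟨ha, hb, hne, hη⟩ := hab
  refine ⟨ha, hb, hne, ?_⟩
  rw [← hagree _ (mem_EU.mpr ?_)]
  · exact hη
  · intro x hx
    rcases Sym2.mem_iff.mp hx with rfl | rfl
    · exact ha
    · exact hb

lemma cutD_dep {S T : Finset (Fin n)} {ω ω' : DE n → Bool}
    (hagree : ∀ e ∉ ED T, ω e = ω' e) (h : ∀ e ∈ cutD S T, ω e = false) :
    ∀ e ∈ cutD S T, ω' e = false := by
  intro e he
  obtain ⟨h1, h2, h3⟩ := mem_cutD.mp he
  rw [← hagree e (fun hc => h2 (mem_ED.mp hc).1)]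
  exact h e he

lemma cutU_dep {S T : Finset (Fin n)} {η η' : UE n → Bool}
    (hagree : ∀ e ∉ EU T, η e = η' e) (h : ∀ e ∈ cutU S T, η e = false) :
    ∀ e ∈ cutU S T, η' e = false := by
  intro e he
  obtain ⟨a, b, hab, h1, h2, h3⟩ := mem_cutU.mp he
  rw [← hagree e (fun hc => h2 (mem_EU.mp hc a (by rw [hab]; exact Sym2.mem_mk_left a b)))]
  exact h e he

variable (q : Fin n → Fin n → ℝ)

noncomputable def Dsum (S : Finset (Fin n)) (r : Fin n) : ℝ≥0 :=
  ∑ ω : DE n → Bool, ind (grdOn S r ω) * ∏ e, wD q e (ω e)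

noncomputable def Usum (hsymm : ∀ k l, q k l = q l k) (S : Finset (Fin n)) (r : Fin n) : ℝ≥0 :=
  ∑ η : UE n → Bool, ind (connOn S r η) * ∏ e, wU q hsymm e (η e)

lemma hwD (h0 : ∀ k l, 0 ≤ q k l) (h1 : ∀ k l, q k l ≤ 1) : ∀ e : DE n, wD q e true + wD q e false = 1 :=
  fun _ => wt_sum (h0 _ _) (h1 _ _)

lemma hwU (h0 : ∀ k l, 0 ≤ q k l) (h1 : ∀ k l, q k l ≤ 1) (hsymm : ∀ k l, q k l = q l k) :
    ∀ e : UE n, wU q hsymm e true + wU q hsymm e false = 1 := by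
  rintro ⟨e, he⟩
  induction e with
  | _ a b => exact wt_sum (by rw [Sym2.lift_mk]; exact h0 a b) (by rw [Sym2.lift_mk]; exact h1 a b)

lemma partitionD (S : Finset (Fin n)) (r : Fin n) (hr : r ∈ S) (ω : DE n → Bool) :
    ∑ T ∈ S.powerset.filter (fun T => r ∈ T), ind (RsetD S r ω = T) = 1 := by
  classical
  rw [Finset.sum_eq_single_of_mem (RsetD S r ω) ?_ (fun T _ hne => ind_false fun h => hne h.symm),
    ind_true rfl]
  rw [Finset.mem_filter, Finset.mem_powerset]
  exact ⟨fun v hv => (mem_RsetD.mp hv).1, mem_RsetD.mpr ⟨hr, .refl⟩⟩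

lemma partitionU (S : Finset (Fin n)) (r : Fin n) (hr : r ∈ S) (η : UE n → Bool) :
    ∑ T ∈ S.powerset.filter (fun T => r ∈ T), ind (RsetU S r η = T) = 1 := by
  classical
  rw [Finset.sum_eq_single_of_mem (RsetU S r η) ?_ (fun T _ hne => ind_false fun h => hne h.symm),
    ind_true rfl]
  rw [Finset.mem_filter, Finset.mem_powerset]
  exact ⟨fun v hv => (mem_RsetU.mp hv).1, mem_RsetU.mpr ⟨hr, .refl⟩⟩

lemma dir_decomp (h0 : ∀ k l, 0 ≤ q k l) (h1 : ∀ k l, q k l ≤ 1) (S : Finset (Fin n)) (r : Fin n) (hr : r ∈ S) :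
    (1 : ℝ≥0) = ∑ T ∈ S.powerset.filter (fun T => r ∈ T),
      Dsum q T r * ∏ e ∈ cutD S T, wD q e false := by
  classical
  calc (1 : ℝ≥0) = ∑ ω : DE n → Bool, ∏ e, wD q e (ω e) := (sum_prod_w _ (hwD q h0 h1)).symm
    _ = ∑ ω : DE n → Bool, ∑ T ∈ S.powerset.filter (fun T => r ∈ T),
          ind (RsetD S r ω = T) * ∏ e, wD q e (ω e) := by
        refine Finset.sum_congr rfl fun ω _ => ?_
        rw [← Finset.sum_mul, partitionD S r hr ω, one_mul]
    _ = ∑ T ∈ S.powerset.filter (fun T => r ∈ T),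
          ∑ ω : DE n → Bool, ind (RsetD S r ω = T) * ∏ e, wD q e (ω e) := Finset.sum_comm
    _ = ∑ T ∈ S.powerset.filter (fun T => r ∈ T),
          Dsum q T r * ∏ e ∈ cutD S T, wD q e false := by
        refine Finset.sum_congr rfl fun T hT => ?_
        rw [Finset.mem_filter, Finset.mem_powerset] at hT
        obtain ⟨hTS, hrT⟩ := hT
        calc ∑ ω : DE n → Bool, ind (RsetD S r ω = T) * ∏ e, wD q e (ω e)
            = ∑ ω : DE n → Bool,
                ind (grdOn T r ω ∧ ∀ e ∈ cutD S T, ω e = false) * ∏ e, wD q e (ω e) := by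
              refine Finset.sum_congr rfl fun ω _ => ?_
              rw [ind_congr (rsetD_eq_iff hrT hTS ω)]
          _ = Dsum q T r * ∑ ω : DE n → Bool,
                ind (∀ e ∈ cutD S T, ω e = false) * ∏ e, wD q e (ω e) :=
              sum_ind_split _ (hwD q h0 h1) (ED T) _ _
                (fun ω ω' ha => grdOn_dep ha) (fun ω ω' ha => cutD_dep ha)
          _ = Dsum q T r * ∏ e ∈ cutD S T, wD q e false := by
              rw [sum_forced _ (hwD q h0 h1)]

lemma undir_decomp (h0 : ∀ k l, 0 ≤ q k l) (h1 : ∀ k l, q k l ≤ 1) (hsymm : ∀ k l, q k l = q l k) (S : Finset (Fin n)) (r : Fin n) (hr : r ∈ S) :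
    (1 : ℝ≥0) = ∑ T ∈ S.powerset.filter (fun T => r ∈ T),
      Usum q hsymm T r * ∏ e ∈ cutU S T, wU q hsymm e false := by
  classical
  calc (1 : ℝ≥0) = ∑ η : UE n → Bool, ∏ e, wU q hsymm e (η e) :=
        (sum_prod_w _ (hwU q h0 h1 hsymm)).symm
    _ = ∑ η : UE n → Bool, ∑ T ∈ S.powerset.filter (fun T => r ∈ T),
          ind (RsetU S r η = T) * ∏ e, wU q hsymm e (η e) := by
        refine Finset.sum_congr rfl fun η _ => ?_
        rw [← Finset.sum_mul, partitionU S r hr η, one_mul]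
    _ = ∑ T ∈ S.powerset.filter (fun T => r ∈ T),
          ∑ η : UE n → Bool, ind (RsetU S r η = T) * ∏ e, wU q hsymm e (η e) := Finset.sum_comm
    _ = ∑ T ∈ S.powerset.filter (fun T => r ∈ T),
          Usum q hsymm T r * ∏ e ∈ cutU S T, wU q hsymm e false := by
        refine Finset.sum_congr rfl fun T hT => ?_
        rw [Finset.mem_filter, Finset.mem_powerset] at hT
        obtain ⟨hTS, hrT⟩ := hT
        calc ∑ η : UE n → Bool, ind (RsetU S r η = T) * ∏ e, wU q hsymm e (η e)
            = ∑ η : UE n → Bool,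
                ind (connOn T r η ∧ ∀ e ∈ cutU S T, η e = false) * ∏ e, wU q hsymm e (η e) := by
              refine Finset.sum_congr rfl fun η _ => ?_
              rw [ind_congr (rsetU_eq_iff hrT hTS η)]
          _ = Usum q hsymm T r * ∑ η : UE n → Bool,
                ind (∀ e ∈ cutU S T, η e = false) * ∏ e, wU q hsymm e (η e) :=
              sum_ind_split _ (hwU q h0 h1 hsymm) (EU T) _ _
                (fun η η' ha => connOn_dep ha) (fun η η' ha => cutU_dep ha)
          _ = Usum q hsymm T r * ∏ e ∈ cutU S T, wU q hsymm e false := by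
              rw [sum_forced _ (hwU q h0 h1 hsymm)]

lemma cut_prod_eq (hsymm : ∀ k l, q k l = q l k) (S T : Finset (Fin n)) :
    ∏ e ∈ cutD S T, wD q e false = ∏ e ∈ cutU S T, wU q hsymm e false := by
  classical
  refine Finset.prod_bij (fun e he => (⟨s(e.1.1, e.1.2), by
      rw [Sym2.isDiag_iff_proj_eq]; exact e.2⟩ : UE n)) ?_ ?_ ?_ ?_
  · intro e he
    obtain ⟨h1, h2, h3⟩ := mem_cutD.mp he
    exact mem_cutU.mpr ⟨e.1.1, e.1.2, rfl, h1, h2, h3⟩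
  · intro e he e' he' hee
    obtain ⟨h1, h2, h3⟩ := mem_cutD.mp he
    obtain ⟨h1', h2', h3'⟩ := mem_cutD.mp he'
    have : s(e.1.1, e.1.2) = s(e'.1.1, e'.1.2) := congrArg Subtype.val hee
    rcases Sym2.mk_eq_mk_iff.mp this with h | h
    · exact Subtype.ext h
    · exfalso
      have : e.1.1 = e'.1.2 := by rw [h]; rfl
      exact h2 (this ▸ h3')
  · intro u hu
    obtain ⟨a, b, hab, h1, h2, h3⟩ := mem_cutU.mp hu
    have hne : a ≠ b := fun hc => h2 (hc ▸ h3)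
    refine ⟨⟨(a, b), hne⟩, mem_cutD.mpr ⟨h1, h2, h3⟩, ?_⟩
    exact Subtype.ext hab.symm
  · intro e he
    rfl

lemma cutD_self (S : Finset (Fin n)) : cutD S S = ∅ := by
  classical
  ext e
  simp only [mem_cutD, Finset.notMem_empty, iff_false]
  tauto

lemma cutU_self (S : Finset (Fin n)) : cutU S S = ∅ := by
  classical
  ext e
  simp only [mem_cutU, Finset.notMem_empty, iff_false]
  rintro ⟨a, b, _, h1, h2, _⟩
  exact h2 h1

lemma usum_eq_dsum (h0 : ∀ k l, 0 ≤ q k l) (h1 : ∀ k l, q k l ≤ 1) (hsymm : ∀ k l, q k l = q l k) :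
    ∀ (S : Finset (Fin n)) (r : Fin n), r ∈ S → Usum q hsymm S r = Dsum q S r := by
  intro S
  induction S using Finset.strongInduction with
  | _ S IH =>
    intro r hr
    classical
    have hSmem : S ∈ S.powerset.filter (fun T => r ∈ T) := by
      rw [Finset.mem_filter, Finset.mem_powerset]; exact ⟨subset_rfl, hr⟩
    have hd := dir_decomp q h0 h1 S r hr
    have hu := undir_decomp q h0 h1 hsymm S r hr
    rw [← Finset.add_sum_erase _ _ hSmem, cutD_self, Finset.prod_empty, mul_one] at hd
    rw [← Finset.add_sum_erase _ _ hSmem, cutU_self, Finset.prod_empty, mul_one] at hu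
    have hsum : ∑ T ∈ (S.powerset.filter (fun T => r ∈ T)).erase S,
        Usum q hsymm T r * ∏ e ∈ cutU S T, wU q hsymm e false
        = ∑ T ∈ (S.powerset.filter (fun T => r ∈ T)).erase S,
        Dsum q T r * ∏ e ∈ cutD S T, wD q e false := by
      refine Finset.sum_congr rfl fun T hT => ?_
      rw [Finset.mem_erase, Finset.mem_filter, Finset.mem_powerset] at hT
      obtain ⟨hne, hTS, hrT⟩ := hT
      rw [IH T (lt_of_le_of_ne hTS hne) r hrT, cut_prod_eq q hsymm S T]
    have := hu.symm.trans hd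
    rw [hsum] at this
    exact add_right_cancel this



instance bern_finite (p : ℝ) : IsFiniteMeasure (bern p) := by
  constructor
  simp only [bern, Measure.add_apply, Measure.smul_apply, smul_eq_mul]
  have h1 : (Measure.dirac true) (Set.univ : Set Bool) ≤ 1 := by simp
  have h2 : (Measure.dirac false) (Set.univ : Set Bool) ≤ 1 := by simp
  calc ENNReal.ofReal p * (Measure.dirac true) Set.univ
        + ENNReal.ofReal (1 - p) * (Measure.dirac false) Set.univ
      ≤ ENNReal.ofReal p * 1 + ENNReal.ofReal (1 - p) * 1 := by
        gcongr
    _ < ⊤ := by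
        rw [mul_one, mul_one]
        exact ENNReal.add_lt_top.mpr ⟨ENNReal.ofReal_lt_top, ENNReal.ofReal_lt_top⟩

lemma bern_singleton (p : ℝ) (b : Bool) : bern p {b} = (wt p b : ℝ≥0∞) := by
  cases b <;>
    simp [bern, Measure.dirac_apply, wt, ENNReal.ofReal]

lemma pi_bern_apply {ι : Type*} [Fintype ι] [DecidableEq ι] (p : ι → ℝ) (A : Set (ι → Bool)) :
    Measure.pi (fun i => bern (p i)) A
      = ↑(∑ ω : ι → Bool, ind (ω ∈ A) * ∏ i, wt (p i) (ω i)) := by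
  classical
  have hsingle : ∀ ω : ι → Bool, Measure.pi (fun i => bern (p i)) {ω}
      = ↑(∏ i, wt (p i) (ω i)) := by
    intro ω
    rw [← Set.univ_pi_singleton ω, Measure.pi_pi]
    push_cast
    exact Finset.prod_congr rfl fun i _ => bern_singleton (p i) (ω i)
  have hF : A = ⋃ ω ∈ (Set.toFinite A).toFinset, ({ω} : Set (ι → Bool)) := by
    ext x
    show x ∈ A ↔ x ∈ ⋃ ω ∈ (Set.toFinite A).toFinset, ({ω} : Set (ι → Bool))
    simp only [Set.mem_iUnion, Set.Finite.mem_toFinset, Set.mem_singleton_iff]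
    constructor
    · intro hx; exact ⟨x, hx, rfl⟩
    · rintro ⟨y, hy, rfl⟩; exact hy
  rw [hF, measure_biUnion_finset ?_ (fun b _ => measurableSet_singleton b)]
  · rw [← hF]
    have : ∀ ω : ι → Bool,
        ind (ω ∈ A) * ∏ i, wt (p i) (ω i)
          = if ω ∈ (Set.toFinite A).toFinset then ∏ i, wt (p i) (ω i) else 0 := by
      intro ω
      by_cases h : ω ∈ A
      · rw [ind_true h, one_mul, if_pos ((Set.Finite.mem_toFinset _).mpr h)]
      · rw [ind_false h, zero_mul, if_neg (fun hc => h ((Set.Finite.mem_toFinset _).mp hc))]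
    simp_rw [this]
    rw [Finset.sum_ite_mem, Finset.univ_inter, ENNReal.coe_finset_sum]
    exact Finset.sum_congr rfl fun ω _ => hsingle ω
  · intro x _ y _ hxy
    simp [Function.onFun, Set.disjoint_singleton, hxy]

lemma grd_univ_iff (r : Fin n) (ω : DE n → Bool) :
    grdOn Finset.univ r ω ↔ ∀ w : Fin n, Relation.ReflTransGen (dirAdj n ω) w r :=
  ⟨fun h w => Relation.ReflTransGen.mono (fun a b hab => hab.2.2) _ _ (h w (Finset.mem_univ w)),
   fun h v _ => Relation.ReflTransGen.mono
     (fun a b hab => ⟨Finset.mem_univ a, Finset.mem_univ b, hab⟩) _ _ (h v)⟩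

lemma conn_univ_iff (r : Fin n) (η : UE n → Bool) :
    connOn Finset.univ r η ↔ (undirGraph n η).Connected := by
  constructor
  · intro h
    rw [SimpleGraph.connected_iff_exists_forall_reachable]
    refine ⟨r, fun w => ?_⟩
    refine SimpleGraph.Reachable.symm ?_
    rw [SimpleGraph.reachable_iff_reflTransGen]
    refine Relation.ReflTransGen.mono (fun a b hab => ?_) _ _ (h w (Finset.mem_univ w))
    obtain ⟨-, -, hne, hηt⟩ := hab
    rw [undirGraph, SimpleGraph.fromEdgeSet_adj]
    exact ⟨⟨_, hηt⟩, hne⟩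
  · intro h w _
    have hr : (undirGraph n η).Reachable w r := h.preconnected w r
    rw [SimpleGraph.reachable_iff_reflTransGen] at hr
    refine Relation.ReflTransGen.mono (fun a b hab => ?_) _ _ hr
    rw [undirGraph, SimpleGraph.fromEdgeSet_adj] at hab
    obtain ⟨⟨hd, hηt⟩, hne⟩ := hab
    exact ⟨Finset.mem_univ a, Finset.mem_univ b, hne, hηt⟩

end Main

end CEG

theorem connected_eq_grounded (n : ℕ) (hn : 1 ≤ n)
    (q : Fin n → Fin n → ℝ) (hsymm : ∀ k l, q k l = q l k)
    (h0 : ∀ k l, 0 ≤ q k l) (h1 : ∀ k l, q k l ≤ 1) :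
    undirMeasure n q hsymm {ω | (undirGraph n ω).Connected} =
    dirMeasure n q
      {ω | ∀ w : Fin n, Relation.ReflTransGen (dirAdj n ω) w ⟨0, by omega⟩} := by
  classical
  rw [undirMeasure, dirMeasure, CEG.pi_bern_apply, CEG.pi_bern_apply]
  have hU : (∑ η : CEG.UE n → Bool,
        CEG.ind (η ∈ {ω : CEG.UE n → Bool | (undirGraph n ω).Connected}) *
        ∏ e, CEG.wt (Sym2.lift ⟨q, fun k l => hsymm k l⟩ e.1) (η e))
      = CEG.Usum q hsymm Finset.univ ⟨0, by omega⟩ := by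
    rw [CEG.Usum]
    refine Finset.sum_congr rfl fun η _ => ?_
    exact congrArg₂ (· * ·)
      (CEG.ind_congr ((CEG.conn_univ_iff (⟨0, by omega⟩ : Fin n) η).symm)) rfl
  have hD : (∑ ω : CEG.DE n → Bool,
        CEG.ind (ω ∈ {ω : CEG.DE n → Bool |
          ∀ w : Fin n, Relation.ReflTransGen (dirAdj n ω) w ⟨0, by omega⟩}) *
        ∏ e, CEG.wt (q e.1.1 e.1.2) (ω e))
      = CEG.Dsum q Finset.univ ⟨0, by omega⟩ := by
    rw [CEG.Dsum]
    refine Finset.sum_congr rfl fun ω _ => ?_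
    exact congrArg₂ (· * ·)
      (CEG.ind_congr ((CEG.grd_univ_iff (⟨0, by omega⟩ : Fin n) ω).symm)) rfl
  rw [hU, hD]
  exact congrArg _
    (CEG.usum_eq_dsum q h0 h1 hsymm Finset.univ ⟨0, by omega⟩ (Finset.mem_univ _))
end

section
/- Define G(η) = η log((1 - e^(-η))/η) for η > 0. Then G''(η) + 1 > 0 for all η > 0; moreover G''(η) + 1 = (1/q)(q' - q)(q e^(-η) - 1) where q(η) = η/(1 - e^(-η)). -/
noncomputable def qfun (η : ℝ) : ℝ := η / (1 - Real.exp (-η))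

noncomputable def Gfun (η : ℝ) : ℝ := η * Real.log ((1 - Real.exp (-η)) / η)

lemma s_pos {x : ℝ} (hx : 0 < x) : 0 < 1 - Real.exp (-x) := by
  have : Real.exp (-x) < 1 := Real.exp_lt_one_iff.mpr (by linarith)
  linarith

lemma hasDerivAt_sub_exp (x : ℝ) :
    HasDerivAt (fun y : ℝ => 1 - Real.exp (-y)) (Real.exp (-x)) x := by
  have h := ((hasDerivAt_neg x).exp).const_sub 1
  refine h.congr_deriv ?_
  ring

noncomputable def G1 (x : ℝ) : ℝ :=
  Real.log (1 - Real.exp (-x)) - Real.log x + x * Real.exp (-x) / (1 - Real.exp (-x)) - 1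

noncomputable def G2 (x : ℝ) : ℝ :=
  2 * Real.exp (-x) / (1 - Real.exp (-x)) - x⁻¹
    - x * Real.exp (-x) / (1 - Real.exp (-x)) ^ 2

lemma hasDerivAt_Gfun {x : ℝ} (hx : 0 < x) : HasDerivAt Gfun (G1 x) x := by
  have heq : (fun y => y * (Real.log (1 - Real.exp (-y)) - Real.log y)) =ᶠ[nhds x] Gfun := by
    filter_upwards [Ioi_mem_nhds hx] with y hy
    simp only [Gfun]
    rw [Real.log_div (s_pos hy).ne' (ne_of_gt hy)]
  have hs := hasDerivAt_sub_exp x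
  have hlog1 := hs.log (s_pos hx).ne'
  have hlogx := Real.hasDerivAt_log hx.ne'
  have hmul := (hasDerivAt_id x).mul (hlog1.sub hlogx)
  have := hmul.congr_of_eventuallyEq heq.symm
  refine this.congr_deriv ?_
  simp only [G1, Pi.sub_apply, id]
  field_simp [(s_pos hx).ne']
  ring

lemma hasDerivAt_G1 {x : ℝ} (hx : 0 < x) : HasDerivAt G1 (G2 x) x := by
  have hs := hasDerivAt_sub_exp x
  have hs0 := (s_pos hx).ne'
  have hlog1 := hs.log hs0
  have hlogx := Real.hasDerivAt_log hx.ne'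
  have hnum : HasDerivAt (fun y : ℝ => y * Real.exp (-y))
      (1 * Real.exp (-x) + x * (Real.exp (-x) * (-1))) x :=
    (hasDerivAt_id x).mul ((hasDerivAt_neg x).exp)
  have hdiv := hnum.div hs hs0
  have h := ((hlog1.sub hlogx).add hdiv).sub_const 1
  have hG1 : G1 = fun y => Real.log (1 - Real.exp (-y)) - Real.log y
      + y * Real.exp (-y) / (1 - Real.exp (-y)) - 1 := rfl
  rw [hG1]
  refine h.congr_deriv ?_
  simp only [G2]
  field_simp
  ring

lemma hasDerivAt_qfun {x : ℝ} (hx : 0 < x) :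
    HasDerivAt qfun ((1 * (1 - Real.exp (-x)) - x * Real.exp (-x)) / (1 - Real.exp (-x)) ^ 2) x :=
  (hasDerivAt_id x).div (hasDerivAt_sub_exp x) (s_pos hx).ne'

theorem Gfun_second_deriv (η : ℝ) (hη : 0 < η) :
    deriv (deriv Gfun) η + 1 > 0 ∧
    deriv (deriv Gfun) η + 1 =
      (1 / qfun η) * (deriv qfun η - qfun η) * (qfun η * Real.exp (-η) - 1) := by
  have hs : 0 < 1 - Real.exp (-η) := s_pos hη
  have hs0 : (1 - Real.exp (-η)) ≠ 0 := hs.ne'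
  have hev : deriv Gfun =ᶠ[nhds η] G1 := by
    filter_upwards [Ioi_mem_nhds hη] with y hy
    exact (hasDerivAt_Gfun hy).deriv
  have hd2 : deriv (deriv Gfun) η = G2 η := by
    rw [hev.deriv_eq]
    exact (hasDerivAt_G1 hη).deriv
  have hq : deriv qfun η
      = (1 * (1 - Real.exp (-η)) - η * Real.exp (-η)) / (1 - Real.exp (-η)) ^ 2 :=
    (hasDerivAt_qfun hη).deriv
  constructor
  · rw [hd2]
    have key : G2 η + 1 = ((1 - Real.exp (-η) - η * Real.exp (-η)) * (η - 1 + Real.exp (-η)))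
        / (η * (1 - Real.exp (-η)) ^ 2) := by
      simp only [G2]
      field_simp
      ring
    rw [key]
    apply div_pos
    · apply mul_pos
      · have h1 : η + 1 < Real.exp η := Real.add_one_lt_exp hη.ne'
        have h4 : Real.exp (-η) * Real.exp η = 1 := by
          rw [← Real.exp_add]; simp
        nlinarith [mul_pos (show (0:ℝ) < Real.exp η - (η + 1) by linarith)
          (Real.exp_pos (-η))]
      · have h1 : -η + 1 < Real.exp (-η) := Real.add_one_lt_exp (by linarith)
        linarith
    · exact mul_pos hη (pow_pos hs 2)
  · rw [hd2, hq]
    simp only [G2, qfun]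
    field_simp
    ring
end

section
/- Fix α > 0 and define Ξ(ρ) = -S(ρ) + ρ log(1 - e^(-αρ)) + (1-ρ) log(1 - e^(-α(1-ρ))) - αρ(1-ρ) for ρ ∈ (0,1), where S(ρ) = ρ log ρ + (1-ρ) log(1-ρ). Then Ξ is strictly convex on (0,1). -/
open Real Set

noncomputable def entropy (ρ : ℝ) : ℝ := ρ * Real.log ρ + (1 - ρ) * Real.log (1 - ρ)

noncomputable def Xi (α ρ : ℝ) : ℝ :=
  -entropy ρ + ρ * Real.log (1 - Real.exp (-(α * ρ))) +
    (1 - ρ) * Real.log (1 - Real.exp (-(α * (1 - ρ)))) - α * ρ * (1 - ρ)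


noncomputable def Qf (u : ℝ) : ℝ := (u-1)*exp (2*u) + (2-u^2)*exp u - u - 1
noncomputable def Qf1 (u : ℝ) : ℝ := (2*u-1)*exp (2*u) + (2-2*u-u^2)*exp u - 1
noncomputable def Qf2 (u : ℝ) : ℝ := 4*u*exp (2*u) - (u^2+4*u)*exp u

lemma hasDerivAt_exp2 (u : ℝ) : HasDerivAt (fun u : ℝ => exp (2*u)) (2*exp (2*u)) u := by
  have := (Real.hasDerivAt_exp (2*u)).comp u ((hasDerivAt_id u).const_mul 2)
  refine this.congr_deriv ?_
  ring

lemma hasDerivAt_Qf (u : ℝ) : HasDerivAt Qf (Qf1 u) u := by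
  have h1 := ((hasDerivAt_id u).sub_const 1).mul (hasDerivAt_exp2 u)
  have h2 := ((hasDerivAt_pow 2 u).const_sub 2).mul (Real.hasDerivAt_exp u)
  refine HasDerivAt.congr_deriv (((h1.add h2).sub (hasDerivAt_id u)).sub_const 1) ?_
  simp [Qf1]
  ring

lemma hasDerivAt_Qf1 (u : ℝ) : HasDerivAt Qf1 (Qf2 u) u := by
  have h1 := (((hasDerivAt_id u).const_mul 2).sub_const 1).mul (hasDerivAt_exp2 u)
  have h2 := ((((hasDerivAt_id u).const_mul 2).const_sub 2).sub (hasDerivAt_pow 2 u)).mul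
      (Real.hasDerivAt_exp u)
  refine HasDerivAt.congr_deriv ((h1.add h2).sub_const 1) ?_
  simp [Qf2]
  ring

lemma Qf2_pos {u : ℝ} (hu : 0 < u) : 0 < Qf2 u := by
  have h2 : exp (2*u) = exp u * exp u := by rw [← Real.exp_add]; ring_nf
  have he := Real.add_one_lt_exp (x := u) hu.ne'
  have hp := Real.exp_pos u
  simp only [Qf2, h2]
  nlinarith [mul_pos hu hp]

lemma Qf1_pos {u : ℝ} (hu : 0 < u) : 0 < Qf1 u := by
  have hm : StrictMonoOn Qf1 (Set.Ici 0) := by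
    apply strictMonoOn_of_deriv_pos (convex_Ici 0)
    · exact fun x _ => (hasDerivAt_Qf1 x).continuousAt.continuousWithinAt
    · intro x hx
      rw [interior_Ici] at hx
      rw [(hasDerivAt_Qf1 x).deriv]
      exact Qf2_pos hx
  have h0 : Qf1 0 = 0 := by norm_num [Qf1]
  have := hm (Set.self_mem_Ici) (Set.mem_Ici.2 hu.le) hu
  rwa [h0] at this

lemma Qf_pos {u : ℝ} (hu : 0 < u) : 0 < Qf u := by
  have hm : StrictMonoOn Qf (Set.Ici 0) := by
    apply strictMonoOn_of_deriv_pos (convex_Ici 0)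
    · exact fun x _ => (hasDerivAt_Qf x).continuousAt.continuousWithinAt
    · intro x hx
      rw [interior_Ici] at hx
      rw [(hasDerivAt_Qf x).deriv]
      exact Qf1_pos hx
  have h0 : Qf 0 = 0 := by norm_num [Qf]
  have := hm (Set.self_mem_Ici) (Set.mem_Ici.2 hu.le) hu
  rwa [h0] at this



noncomputable def gf (α x : ℝ) : ℝ :=
  x * log (1 - exp (-(α*x))) - x * log x + α*x^2/2 - α*x/2

noncomputable def gf1 (α x : ℝ) : ℝ :=
  log (1 - exp (-(α*x))) + α*x*exp (-(α*x))/(1 - exp (-(α*x))) - log x - 1 + α*x - α/2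

noncomputable def gf2 (α x : ℝ) : ℝ :=
  2*α*exp (-(α*x))/(1 - exp (-(α*x))) - α^2*x*exp (-(α*x))/(1 - exp (-(α*x)))^2 - 1/x + α

lemma one_sub_exp_pos {α x : ℝ} (hα : 0 < α) (hx : 0 < x) : 0 < 1 - exp (-(α*x)) := by
  have : exp (-(α*x)) < 1 := Real.exp_lt_one_iff.2 (by nlinarith)
  linarith

lemma hasDerivAt_inner {α x : ℝ} :
    HasDerivAt (fun x : ℝ => exp (-(α*x))) (-α * exp (-(α*x))) x := by
  have := (Real.hasDerivAt_exp (-(α*x))).comp x (((hasDerivAt_id x).const_mul α).neg)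
  refine this.congr_deriv ?_
  ring

lemma hasDerivAt_gf {α x : ℝ} (hα : 0 < α) (hx : 0 < x) :
    HasDerivAt (gf α) (gf1 α x) x := by
  have hne : (1 - exp (-(α*x))) ≠ 0 := (one_sub_exp_pos hα hx).ne'
  have hbase : HasDerivAt (fun x : ℝ => 1 - exp (-(α*x))) (-(-α * exp (-(α*x)))) x :=
    hasDerivAt_inner.const_sub 1
  have hlog1 := hbase.log hne
  have h1 := (hasDerivAt_id x).mul hlog1
  have h2 := (hasDerivAt_id x).mul (Real.hasDerivAt_log hx.ne')
  have h3 := (hasDerivAt_pow 2 x).const_mul α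
  have h4 := (hasDerivAt_id x).const_mul α
  refine HasDerivAt.congr_deriv (((h1.sub h2).add (h3.div_const 2)).sub (h4.div_const 2)) ?_
  simp only [gf1, id_eq, Nat.cast_ofNat, pow_one]
  field_simp
  ring

lemma hasDerivAt_gf1 {α x : ℝ} (hα : 0 < α) (hx : 0 < x) :
    HasDerivAt (gf1 α) (gf2 α x) x := by
  have hpos := one_sub_exp_pos hα hx
  have hne : (1 - exp (-(α*x))) ≠ 0 := hpos.ne'
  have hbase : HasDerivAt (fun x : ℝ => 1 - exp (-(α*x))) (-(-α * exp (-(α*x)))) x :=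
    hasDerivAt_inner.const_sub 1
  have hlog1 := hbase.log hne
  have hN := (((hasDerivAt_id x).const_mul α).mul (hasDerivAt_inner (α := α)))
  have hdiv := hN.div hbase hne
  have hlogx := Real.hasDerivAt_log hx.ne'
  have h4 := (hasDerivAt_id x).const_mul α
  refine HasDerivAt.congr_deriv
    (((((hlog1.add hdiv).sub hlogx).sub_const 1).add h4).sub_const (α/2)) ?_
  simp only [gf2, id_eq, Pi.mul_apply]
  field_simp [hx.ne']
  ring


lemma gf2_pos {α x : ℝ} (hα : 0 < α) (hx0 : 0 < x) : 0 < gf2 α x := by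
  set w := exp (-(α*x)) with hwdef
  have hw : 0 < w := exp_pos _
  have hpos : 0 < 1 - w := one_sub_exp_pos hα hx0
  have hu : 0 < α*x := mul_pos hα hx0
  have hP := Qf_pos hu
  have hEw : exp (α*x) = w⁻¹ := by
    rw [hwdef, Real.exp_neg, inv_inv]
  have hE2 : exp (2*(α*x)) = w⁻¹ * w⁻¹ := by
    rw [two_mul, Real.exp_add, hEw]
  have key : gf2 α x * (x * (1 - w)^2) = Qf (α*x) * w^2 := by
    simp only [gf2, Qf, hE2, hEw, ← hwdef]
    field_simp
    ring
  have h1 : 0 < Qf (α*x) * w^2 := mul_pos hP (pow_pos hw 2)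
  rw [← key] at h1
  have h2 : 0 < x * (1 - w)^2 := by positivity
  by_contra hcon
  push_neg at hcon
  nlinarith

lemma gf_strictConvexOn {α : ℝ} (hα : 0 < α) :
    StrictConvexOn ℝ (Ioo (0:ℝ) 1) (gf α) := by
  apply strictConvexOn_of_deriv2_pos (convex_Ioo 0 1)
  · exact fun x hx => (hasDerivAt_gf hα hx.1).continuousAt.continuousWithinAt
  · intro x hx
    rw [interior_Ioo] at hx
    have hx0 := hx.1
    have hev : deriv (gf α) =ᶠ[nhds x] gf1 α :=
      Filter.eventuallyEq_of_mem (Ioi_mem_nhds hx0) (fun y hy => (hasDerivAt_gf hα hy).deriv)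
    have e0 : deriv^[2] (gf α) x = deriv (deriv (gf α)) x := by
      simp [Function.iterate_succ', Function.comp]
    rw [e0, hev.deriv_eq, (hasDerivAt_gf1 hα hx0).deriv]
    exact gf2_pos hα hx0



lemma gf_reflect_strictConvexOn {α : ℝ} (hα : 0 < α) :
    StrictConvexOn ℝ (Ioo (0:ℝ) 1) (fun ρ => gf α (1 - ρ)) := by
  refine ⟨convex_Ioo 0 1, ?_⟩
  intro x hx y hy hne a b ha hb hab
  have hx' : (1:ℝ) - x ∈ Ioo (0:ℝ) 1 := ⟨by linarith [hx.2], by linarith [hx.1]⟩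
  have hy' : (1:ℝ) - y ∈ Ioo (0:ℝ) 1 := ⟨by linarith [hy.2], by linarith [hy.1]⟩
  have hne' : (1:ℝ) - x ≠ 1 - y := fun h => hne (by linarith)
  have h := (gf_strictConvexOn hα).2 hx' hy' hne' ha hb hab
  simp only [smul_eq_mul] at h ⊢
  have e : a * (1-x) + b * (1-y) = 1 - (a*x + b*y) := by linarith
  rw [e] at h
  exact h

theorem Xi_strictConvexOn (α : ℝ) (hα : 0 < α) :
    StrictConvexOn ℝ (Set.Ioo (0 : ℝ) 1) (Xi α) := by
  have hXi : Xi α = fun ρ => gf α ρ + gf α (1 - ρ) := by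
    funext ρ
    simp only [Xi, entropy, gf]
    ring
  rw [hXi]
  exact (gf_strictConvexOn hα).add (gf_reflect_strictConvexOn hα)
end

section
/- Fix α > 0 and define Ξ(ρ) = -S(ρ) + ρ log(1 - e^(-αρ)) + (1-ρ) log(1 - e^(-α(1-ρ))) - αρ(1-ρ) for ρ ∈ (0,1), extended by continuity to ρ ∈ {0,1} with Ξ(0) = Ξ(1) = log(1 - e^(-α)). Then Ξ is symmetric about ρ = 1/2, and Ξ(ρ) < Ξ(0) for all ρ ∈ (0,1). -/
/-- `Ξ` on `(0,1)`, extended by continuity to the endpoints by the value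
`log(1 - e^{-α})`. -/
noncomputable def XiExt (α ρ : ℝ) : ℝ :=
  if ρ = 0 ∨ ρ = 1 then Real.log (1 - Real.exp (-α))
  else
    -entropy ρ + ρ * Real.log (1 - Real.exp (-(α * ρ))) +
      (1 - ρ) * Real.log (1 - Real.exp (-(α * (1 - ρ)))) - α * ρ * (1 - ρ)

theorem XiExt_symm_and_max (α : ℝ) (hα : 0 < α) :
    (∀ ρ ∈ Set.Icc (0 : ℝ) 1, XiExt α (1 - ρ) = XiExt α ρ) ∧
    (∀ ρ ∈ Set.Ioo (0 : ℝ) 1, XiExt α ρ < XiExt α 0) := by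
  constructor
  · intro ρ _
    by_cases h : ρ = 0 ∨ ρ = 1
    · rcases h with h | h <;> subst h <;> norm_num [XiExt]
    · have h' : ¬(1 - ρ = 0 ∨ 1 - ρ = 1) := by
        push_neg at h ⊢
        exact ⟨fun hc => h.2 (by linarith), fun hc => h.1 (by linarith)⟩
      simp only [XiExt, if_neg h, if_neg h', entropy, sub_sub_cancel]
      ring
  · intro ρ hρ
    obtain ⟨h0, h1⟩ := hρ
    have h1' : 0 < 1 - ρ := by linarith
    have hαρ : 0 < α * ρ := mul_pos hα h0
    have hα1ρ : 0 < α * (1 - ρ) := mul_pos hα h1'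
    set E1 : ℝ := Real.exp (-(α * ρ)) with hE1
    set E2 : ℝ := Real.exp (-(α * (1 - ρ))) with hE2
    have hE1pos : 0 < E1 := Real.exp_pos _
    have hE2pos : 0 < E2 := Real.exp_pos _
    have ha : 0 < 1 - E1 := by
      have : E1 < 1 := Real.exp_lt_one_iff.mpr (by linarith)
      linarith
    have hb : 0 < 1 - E2 := by
      have : E2 < 1 := Real.exp_lt_one_iff.mpr (by linarith)
      linarith
    set x : ℝ := (1 - E1) / ρ with hxdef
    set y : ℝ := E1 * (1 - E2) / (1 - ρ) with hydef
    have hx : x ∈ Set.Ioi (0:ℝ) := div_pos ha h0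
    have hy : y ∈ Set.Ioi (0:ℝ) := div_pos (mul_pos hE1pos hb) h1'
    -- key strict inequality showing x ≠ y
    have hkey : E1 * (1 - E2) * ρ < (1 - E1) * (1 - ρ) := by
      have e1 : α * ρ + 1 < Real.exp (α * ρ) := Real.add_one_lt_exp (ne_of_gt hαρ)
      have e2 : -(α * (1 - ρ)) + 1 < E2 := Real.add_one_lt_exp (by nlinarith)
      have emul : Real.exp (α * ρ) * E1 = 1 := by
        rw [hE1, ← Real.exp_add]; simp
      -- 1 - E1 > α * ρ * E1
      have f1 : α * ρ * E1 < 1 - E1 := by nlinarith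
      -- 1 - E2 < α * (1 - ρ)
      have f2 : 1 - E2 < α * (1 - ρ) := by linarith
      nlinarith [mul_pos hE1pos h0, mul_pos (mul_pos hE1pos h0) h1']
    have hxy : x ≠ y := by
      have : y < x := by
        rw [hxdef, hydef, div_lt_div_iff₀ h1' h0]
        linarith [hkey]
      exact (ne_of_lt this).symm
    have hmain := strictConcaveOn_log_Ioi.2 hx hy hxy h0 h1' (by ring)
    simp only [smul_eq_mul] at hmain
    -- compute the argument of log on the RHS
    have harg : ρ * x + (1 - ρ) * y = 1 - Real.exp (-α) := by
      have hE12 : E1 * E2 = Real.exp (-α) := by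
        rw [hE1, hE2, ← Real.exp_add]; ring_nf
      rw [hxdef, hydef]
      field_simp [hxdef, hydef, ne_of_gt h0, ne_of_gt h1']
      nlinarith [hE12]
    -- expand the logs on the LHS
    have hlogx : Real.log x = Real.log (1 - E1) - Real.log ρ :=
      Real.log_div (ne_of_gt ha) (ne_of_gt h0)
    have hlogy : Real.log y = -(α * ρ) + Real.log (1 - E2) - Real.log (1 - ρ) := by
      rw [hydef, Real.log_div (by positivity) (ne_of_gt h1'),
        Real.log_mul (ne_of_gt hE1pos) (ne_of_gt hb), hE1, Real.log_exp]
    rw [harg, hlogx, hlogy] at hmain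
    have h01 : ¬(ρ = 0 ∨ ρ = 1) := by
      push_neg
      exact ⟨ne_of_gt h0, by linarith⟩
    rw [XiExt, if_neg h01, XiExt, if_pos (Or.inl rfl)]
    calc -entropy ρ + ρ * Real.log (1 - Real.exp (-(α * ρ))) +
          (1 - ρ) * Real.log (1 - Real.exp (-(α * (1 - ρ)))) - α * ρ * (1 - ρ)
        = ρ * (Real.log (1 - E1) - Real.log ρ) +
            (1 - ρ) * (-(α * ρ) + Real.log (1 - E2) - Real.log (1 - ρ)) := by
          rw [entropy]; ring
      _ < Real.log (1 - Real.exp (-α)) := hmain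
end

section
/- Let n ≥ 1, 0 ≤ α < n, and let C denote the restriction of G(n, α/n) to a fixed vertex subset S. Then P(C is connected) ≤ (1 - α/n)^(-|S|²/2) · P(C is a spanning tree of S). -/
open MeasureTheory
open scoped ENNReal

/-! ### Auxiliary lemmas -/

section Aux

lemma bern_apply_singleton (p : ℝ) (b : Bool) :
    bern p {b} = if b then ENNReal.ofReal p else ENNReal.ofReal (1 - p) := by
  cases b <;> simp [bern, Measure.dirac_apply]

lemma bern_univ (p : ℝ) (hp0 : 0 ≤ p) (hp1 : p ≤ 1) : bern p Set.univ = 1 := by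
  simp only [bern, Measure.add_apply, Measure.smul_apply, Measure.dirac_apply, smul_eq_mul,
    Set.mem_univ, Set.indicator_of_mem, Pi.one_apply, mul_one]
  rw [← ENNReal.ofReal_add hp0 (by linarith)]
  norm_num

instance bern_finite (p : ℝ) : IsFiniteMeasure (bern p) := by
  constructor
  simp only [bern, Measure.add_apply, Measure.smul_apply, Measure.dirac_apply, smul_eq_mul,
    Set.mem_univ, Set.indicator_of_mem, Pi.one_apply, mul_one]
  exact ENNReal.add_lt_top.2 ⟨ENNReal.ofReal_lt_top, ENNReal.ofReal_lt_top⟩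

lemma pi_cylinder {ι : Type*} [Fintype ι] [DecidableEq ι] (p : ℝ) (hp0 : 0 ≤ p) (hp1 : p ≤ 1)
    (s : Finset ι) (f : ι → Bool) :
    Measure.pi (fun _ : ι => bern p) {ω : ι → Bool | ∀ i ∈ s, ω i = f i}
      = ∏ i ∈ s, bern p {f i} := by
  have hset : {ω : ι → Bool | ∀ i ∈ s, ω i = f i}
      = Set.pi Set.univ (fun i => if i ∈ s then ({f i} : Set Bool) else Set.univ) := by
    ext ω
    simp only [Set.mem_setOf_eq, Set.mem_pi, Set.mem_univ, true_implies]
    constructor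
    · intro h i
      by_cases hi : i ∈ s <;> simp [hi, h]
    · intro h i hi
      have := h i
      simpa [hi] using this
  rw [hset, Measure.pi_pi]
  have : ∀ i : ι, bern p (if i ∈ s then ({f i} : Set Bool) else Set.univ)
      = if i ∈ s then bern p {f i} else 1 := by
    intro i
    by_cases hi : i ∈ s
    · simp [hi]
    · rw [if_neg hi, if_neg hi, bern_univ p hp0 hp1]
  rw [Finset.prod_congr rfl (fun i _ => this i), Finset.prod_ite_mem Finset.univ s,
    Finset.univ_inter]

open SimpleGraph in
lemma reachable_of_delete {V : Type*} {G : SimpleGraph V} {v w : V}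
    (hvw : (G \ SimpleGraph.fromEdgeSet {s(v, w)}).Reachable v w) {x y : V}
    (h : G.Reachable x y) : (G \ SimpleGraph.fromEdgeSet {s(v, w)}).Reachable x y := by
  obtain ⟨p⟩ := h
  induction p with
  | nil => exact Reachable.refl _
  | @cons u a y h' p ih =>
    refine Reachable.trans ?_ ih
    by_cases he : s(u, a) = s(v, w)
    · rw [Sym2.eq_iff] at he
      rcases he with ⟨rfl, rfl⟩ | ⟨rfl, rfl⟩
      · exact hvw
      · exact hvw.symm
    · refine SimpleGraph.Adj.reachable ?_
      rw [SimpleGraph.sdiff_adj, SimpleGraph.fromEdgeSet_adj]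
      exact ⟨h', fun hc => he (by simpa using hc.1)⟩

open SimpleGraph in
lemma exists_spanning_tree {V : Type*} [Fintype V] {G : SimpleGraph V}
    (hG : G.Connected) : ∃ T ≤ G, T.IsTree := by
  classical
  obtain ⟨T, hT, hmin'⟩ :=
    Finset.exists_minimal (s := Finset.univ.filter (fun H : SimpleGraph V => H ≤ G ∧ H.Connected))
      ⟨G, by simp [hG]⟩
  have hmin : ∀ x' ∈ Finset.univ.filter (fun H : SimpleGraph V => H ≤ G ∧ H.Connected),
      ¬ x' < T := fun x' hx' hlt => hlt.ne (le_antisymm hlt.le (hmin' hx' hlt.le))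
  simp only [Finset.mem_filter, Finset.mem_univ, true_and] at hT
  refine ⟨T, hT.1, hT.2, ?_⟩
  rw [isAcyclic_iff_forall_adj_isBridge]
  intro v w hadj
  by_contra hb
  rw [isBridge_iff] at hb
  push_neg at hb
  replace hb : (T \ SimpleGraph.fromEdgeSet {s(v, w)}).Reachable v w := hb
  set T' := T \ SimpleGraph.fromEdgeSet {s(v, w)} with hT'
  haveI : Nonempty V := hT.2.nonempty
  have hconn : T'.Connected := ⟨fun x y => reachable_of_delete hb (hT.2.preconnected x y)⟩
  have hlt : T' < T := by
    refine lt_of_le_of_ne sdiff_le ?_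
    intro heq
    have : ¬ T'.Adj v w := by
      simp [hT', SimpleGraph.sdiff_adj, SimpleGraph.fromEdgeSet_adj, hadj.ne]
    rw [heq] at this
    exact this hadj
  exact hmin T' (by simp [Finset.mem_filter, le_trans (show T' ≤ T from sdiff_le) hT.1, hconn]) hlt

open scoped Classical in
noncomputable def edgesIn (n : ℕ) (S : Finset (Fin n)) :
    Finset {e : Sym2 (Fin n) // ¬ e.IsDiag} :=
  Finset.univ.filter (fun e => ∀ v ∈ e.val, v ∈ S)

open scoped Classical in
noncomputable def edgesOf (n : ℕ) (S : Finset (Fin n))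
    (T : SimpleGraph (S : Set (Fin n))) : Finset {e : Sym2 (Fin n) // ¬ e.IsDiag} :=
  Finset.univ.filter
    (fun e => ∃ a b : (S : Set (Fin n)), T.Adj a b ∧ e.val = s(a.val, b.val))

variable {n : ℕ} {S : Finset (Fin n)} {T : SimpleGraph (S : Set (Fin n))}

lemma mem_edgesOf_iff {a b : (S : Set (Fin n))}
    (hd : ¬ (s((a : Fin n), (b : Fin n))).IsDiag) :
    (⟨s((a : Fin n), (b : Fin n)), hd⟩ : {e : Sym2 (Fin n) // ¬ e.IsDiag}) ∈ edgesOf n S T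
      ↔ T.Adj a b := by
  classical
  simp only [edgesOf, Finset.mem_filter, Finset.mem_univ, true_and]
  constructor
  · rintro ⟨a', b', hadj, heq⟩
    rw [Sym2.eq_iff] at heq
    rcases heq with ⟨ha, hb⟩ | ⟨ha, hb⟩
    · rwa [Subtype.coe_injective ha, Subtype.coe_injective hb]
    · rw [Subtype.coe_injective ha, Subtype.coe_injective hb]
      exact hadj.symm
  · intro h
    exact ⟨a, b, h, rfl⟩

lemma edgesOf_subset : edgesOf n S T ⊆ edgesIn n S := by
  classical
  intro e he
  simp only [edgesOf, Finset.mem_filter, Finset.mem_univ, true_and] at he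
  obtain ⟨a, b, _, heq⟩ := he
  simp only [edgesIn, Finset.mem_filter, Finset.mem_univ, true_and]
  intro v hv
  rw [heq, Sym2.mem_iff] at hv
  rcases hv with rfl | rfl
  · exact a.2
  · exact b.2

lemma erGraph_induce_adj (ω : {e : Sym2 (Fin n) // ¬ e.IsDiag} → Bool)
    (a b : (S : Set (Fin n))) :
    ((erGraph n ω).induce (S : Set (Fin n))).Adj a b ↔
      ∃ hd : ¬ (s((a : Fin n), (b : Fin n))).IsDiag,
        ω ⟨s((a : Fin n), (b : Fin n)), hd⟩ = true := by
  simp only [SimpleGraph.comap_adj, Function.Embedding.coe_subtype, erGraph,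
    SimpleGraph.fromEdgeSet_adj, Set.mem_setOf_eq]
  constructor
  · rintro ⟨⟨hd, hw⟩, _⟩
    exact ⟨hd, hw⟩
  · rintro ⟨hd, hw⟩
    refine ⟨⟨hd, hw⟩, ?_⟩
    rw [← Sym2.mk_isDiag_iff] at *
    exact hd

lemma event_le (ω : {e : Sym2 (Fin n) // ¬ e.IsDiag} → Bool) :
    T ≤ (erGraph n ω).induce (S : Set (Fin n)) ↔
      ∀ e ∈ edgesOf n S T, ω e = true := by
  constructor
  · intro hle e he
    classical
    have he' := he
    simp only [edgesOf, Finset.mem_filter, Finset.mem_univ, true_and] at he'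
    obtain ⟨a, b, hadj, heq⟩ := he'
    have := (erGraph_induce_adj ω a b).1 (hle hadj)
    obtain ⟨hd, hw⟩ := this
    have : e = ⟨s((a : Fin n), (b : Fin n)), hd⟩ := Subtype.ext heq
    rw [this]
    exact hw
  · intro h a b hadj
    have hne : (a : Fin n) ≠ (b : Fin n) :=
      fun hc => hadj.ne (Subtype.coe_injective hc)
    have hd : ¬ (s((a : Fin n), (b : Fin n))).IsDiag := by
      rw [Sym2.mk_isDiag_iff]; exact hne
    rw [erGraph_induce_adj ω a b]
    exact ⟨hd, h _ ((mem_edgesOf_iff hd).2 hadj)⟩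

lemma event_eq (ω : {e : Sym2 (Fin n) // ¬ e.IsDiag} → Bool) :
    (erGraph n ω).induce (S : Set (Fin n)) = T ↔
      ∀ e ∈ edgesIn n S, ω e = (if e ∈ edgesOf n S T then true else false) := by
  classical
  constructor
  · intro heq e he
    simp only [edgesIn, Finset.mem_filter, Finset.mem_univ, true_and] at he
    obtain ⟨e, hd⟩ := e
    induction e with
    | _ x y =>
      have hx : x ∈ S := he x (Sym2.mem_mk_left x y)
      have hy : y ∈ S := he y (Sym2.mem_mk_right x y)
      set a : (S : Set (Fin n)) := ⟨x, hx⟩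
      set b : (S : Set (Fin n)) := ⟨y, hy⟩
      have hmem : (⟨s(x, y), hd⟩ : {e : Sym2 (Fin n) // ¬ e.IsDiag}) ∈ edgesOf n S T
          ↔ T.Adj a b := mem_edgesOf_iff (a := a) (b := b) hd
      have hadj : T.Adj a b ↔ ω ⟨s(x, y), hd⟩ = true := by
        rw [← heq, erGraph_induce_adj ω a b]
        constructor
        · rintro ⟨_, hw⟩; exact hw
        · intro hw; exact ⟨hd, hw⟩
      by_cases ht : T.Adj a b
      · rw [if_pos (hmem.2 ht)]; exact hadj.1 ht
      · rw [if_neg (fun hc => ht (hmem.1 hc))]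
        cases hval : ω ⟨s(x, y), hd⟩
        · rfl
        · exact absurd (hadj.2 hval) ht
  · intro h
    ext a b
    by_cases hab : a = b
    · subst hab
      simp
    · have hne : (a : Fin n) ≠ (b : Fin n) := fun hc => hab (Subtype.coe_injective hc)
      have hd : ¬ (s((a : Fin n), (b : Fin n))).IsDiag := by
        rw [Sym2.mk_isDiag_iff]; exact hne
      have hE : (⟨s((a : Fin n), (b : Fin n)), hd⟩ : {e : Sym2 (Fin n) // ¬ e.IsDiag})
          ∈ edgesIn n S := by
        simp only [edgesIn, Finset.mem_filter, Finset.mem_univ, true_and]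
        intro v hv
        rw [Sym2.mem_iff] at hv
        rcases hv with rfl | rfl
        · exact a.2
        · exact b.2
      have hval := h _ hE
      rw [erGraph_induce_adj ω a b, ← mem_edgesOf_iff (T := T) hd]
      by_cases hm : (⟨s((a : Fin n), (b : Fin n)), hd⟩ : {e : Sym2 (Fin n) // ¬ e.IsDiag})
          ∈ edgesOf n S T
      · rw [if_pos hm] at hval
        simp [hm, hval, hne]
      · rw [if_neg hm] at hval
        simp [hm, hval, hne]

lemma choose_two_le_real (k : ℕ) : ((k.choose 2 : ℕ) : ℝ) ≤ (k : ℝ) ^ 2 / 2 := by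
  have h1 : k.choose 2 = k * (k - 1) / 2 := Nat.choose_two_right k
  have h2 : ((k * (k - 1) / 2 : ℕ) : ℝ) ≤ ((k * (k - 1) : ℕ) : ℝ) / 2 := Nat.cast_div_le
  have h3 : (k * (k - 1) : ℕ) ≤ k * k := Nat.mul_le_mul_left k (Nat.sub_le k 1)
  rw [h1]
  refine h2.trans ?_
  have : ((k * (k - 1) : ℕ) : ℝ) ≤ ((k * k : ℕ) : ℝ) := by exact_mod_cast h3
  have hk : ((k * k : ℕ) : ℝ) = (k : ℝ) ^ 2 := by push_cast; ring
  linarith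

lemma card_edgesIn_le : ((edgesIn n S).card : ℝ) ≤ (S.card : ℝ) ^ 2 / 2 := by
  classical
  have h : ∀ e ∈ edgesIn n S, ∀ v ∈ e.val, v ∈ S := by
    intro e he
    simpa only [edgesIn, Finset.mem_filter, Finset.mem_univ, true_and] using he
  have hg : ∀ e : Sym2 (S : Set (Fin n)), ¬ e.IsDiag →
      ¬ (e.map (Subtype.val)).IsDiag := by
    intro e
    induction e with
    | _ a b =>
      intro hd
      simpa [Sym2.mk_isDiag_iff, Subtype.coe_injective.eq_iff] using hd
  let g : {e : Sym2 (S : Set (Fin n)) // ¬ e.IsDiag} → {e : Sym2 (Fin n) // ¬ e.IsDiag} :=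
    fun e => ⟨e.val.map (Subtype.val), hg e.val e.2⟩
  have hsub : edgesIn n S ⊆ Finset.univ.image g := by
    intro e he
    obtain ⟨ev, hd⟩ := e
    induction ev with
    | _ x y =>
      have hx : x ∈ S := h _ he x (Sym2.mem_mk_left x y)
      have hy : y ∈ S := h _ he y (Sym2.mem_mk_right x y)
      have hxy : x ≠ y := by rwa [Sym2.mk_isDiag_iff] at hd
      have hd' : ¬ (s((⟨x, hx⟩ : (S : Set (Fin n))), (⟨y, hy⟩ : (S : Set (Fin n))))).IsDiag := by
        rw [Sym2.mk_isDiag_iff]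
        exact fun hc => hxy (congrArg Subtype.val hc)
      refine Finset.mem_image.2 ⟨⟨s(⟨x, hx⟩, ⟨y, hy⟩), hd'⟩, Finset.mem_univ _, ?_⟩
      exact Subtype.ext (by simp [g])
  have hcard : (edgesIn n S).card ≤ Fintype.card {e : Sym2 (S : Set (Fin n)) // ¬ e.IsDiag} := by
    calc (edgesIn n S).card ≤ (Finset.univ.image g).card := Finset.card_le_card hsub
      _ ≤ (Finset.univ : Finset {e : Sym2 (S : Set (Fin n)) // ¬ e.IsDiag}).card :=
        Finset.card_image_le
      _ = _ := Finset.card_univ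
  have hc2 : Fintype.card {e : Sym2 (S : Set (Fin n)) // ¬ e.IsDiag}
      = (Fintype.card (S : Set (Fin n))).choose 2 := Sym2.card_subtype_not_diag
  have hcS : Fintype.card (S : Set (Fin n)) = S.card := by simp
  have := choose_two_le_real S.card
  rw [hc2, hcS] at hcard
  calc ((edgesIn n S).card : ℝ) ≤ ((S.card.choose 2 : ℕ) : ℝ) := by exact_mod_cast hcard
    _ ≤ _ := this

end Aux

theorem connected_le_tree (n : ℕ) (hn : 1 ≤ n) (α : ℝ) (hα0 : 0 ≤ α) (hαn : α < n)
    (S : Finset (Fin n)) :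
    erMeasure n (α / n) {ω | ((erGraph n ω).induce (S : Set (Fin n))).Connected} ≤
      ENNReal.ofReal ((1 - α / n) ^ (-((S.card : ℝ) ^ 2) / 2)) *
        erMeasure n (α / n) {ω | ((erGraph n ω).induce (S : Set (Fin n))).IsTree} := by
  classical
  have hn0 : (0 : ℝ) < n := by exact_mod_cast Nat.lt_of_lt_of_le Nat.zero_lt_one hn
  have hp0 : 0 ≤ α / n := div_nonneg hα0 hn0.le
  have hp1 : α / n < 1 := (div_lt_one hn0).2 hαn
  set p : ℝ := α / n with hpdef
  set q : ℝ := 1 - p with hqdef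
  have hq0 : 0 < q := by rw [hqdef]; linarith
  have hq1 : q ≤ 1 := by rw [hqdef]; linarith
  set c : ℝ≥0∞ := ENNReal.ofReal (q ^ (-((S.card : ℝ) ^ 2) / 2)) with hcdef
  have hmeas : ∀ s : Set ({e : Sym2 (Fin n) // ¬ e.IsDiag} → Bool), MeasurableSet s :=
    fun s => s.to_countable.measurableSet
  set trees : Finset (SimpleGraph (S : Set (Fin n))) :=
    Finset.univ.filter (fun T => T.IsTree) with htrees
  -- Step 1 : union bound over spanning trees
  have step1 : erMeasure n p {ω | ((erGraph n ω).induce (S : Set (Fin n))).Connected} ≤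
      ∑ T ∈ trees, erMeasure n p {ω | T ≤ (erGraph n ω).induce (S : Set (Fin n))} := by
    refine le_trans (measure_mono ?_) (measure_biUnion_finset_le trees _)
    intro ω hω
    obtain ⟨T, hle, htree⟩ := exists_spanning_tree hω
    have hTmem : T ∈ trees := by
      rw [htrees]; exact Finset.mem_filter.2 ⟨Finset.mem_univ _, htree⟩
    exact Set.mem_biUnion hTmem hle
  -- Step 2 : per-tree estimate
  have step2 : ∀ T : SimpleGraph (S : Set (Fin n)),
      erMeasure n p {ω | T ≤ (erGraph n ω).induce (S : Set (Fin n))} ≤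
        c * erMeasure n p {ω | (erGraph n ω).induce (S : Set (Fin n)) = T} := by
    intro T
    have hA : edgesOf n S T ⊆ edgesIn n S := edgesOf_subset
    set a : ℕ := (edgesOf n S T).card with hadef
    set m : ℕ := ((edgesIn n S).filter (fun e => e ∉ edgesOf n S T)).card with hmdef
    have hm1 : erMeasure n p {ω | T ≤ (erGraph n ω).induce (S : Set (Fin n))}
        = ENNReal.ofReal p ^ a := by
      have hsets : {ω : {e : Sym2 (Fin n) // ¬ e.IsDiag} → Bool |
          T ≤ (erGraph n ω).induce (S : Set (Fin n))}
          = {ω | ∀ e ∈ edgesOf n S T, ω e = (fun _ => true) e} :=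
        Set.ext (fun ω => event_le ω)
      rw [erMeasure, hsets, pi_cylinder p hp0 hp1.le]
      simp [bern_apply_singleton, Finset.prod_const, hadef]
    have hm2 : erMeasure n p {ω | (erGraph n ω).induce (S : Set (Fin n)) = T}
        = ENNReal.ofReal p ^ a * ENNReal.ofReal q ^ m := by
      have hsets : {ω : {e : Sym2 (Fin n) // ¬ e.IsDiag} → Bool |
          (erGraph n ω).induce (S : Set (Fin n)) = T}
          = {ω | ∀ e ∈ edgesIn n S,
              ω e = (fun e => if e ∈ edgesOf n S T then true else false) e} :=
        Set.ext (fun ω => event_eq ω)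
      rw [erMeasure, hsets, pi_cylinder p hp0 hp1.le]
      rw [← Finset.prod_filter_mul_prod_filter_not (edgesIn n S) (· ∈ edgesOf n S T)]
      have hfil : (edgesIn n S).filter (· ∈ edgesOf n S T) = edgesOf n S T := by
        rw [Finset.filter_mem_eq_inter]
        exact Finset.inter_eq_right.2 hA
      congr 1
      · rw [hfil]
        rw [Finset.prod_congr rfl (fun e he => by
          simp [bern_apply_singleton, if_pos he] : ∀ e ∈ edgesOf n S T,
            bern p {(fun e => if e ∈ edgesOf n S T then true else false) e}
              = ENNReal.ofReal p)]
        simp [Finset.prod_const, hadef]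
      · rw [Finset.prod_congr rfl (fun e he => by
          have : e ∉ edgesOf n S T := (Finset.mem_filter.1 he).2
          simp [bern_apply_singleton, if_neg this, hqdef] :
            ∀ e ∈ (edgesIn n S).filter (fun e => e ∉ edgesOf n S T),
            bern p {(fun e => if e ∈ edgesOf n S T then true else false) e}
              = ENNReal.ofReal q)]
        simp [Finset.prod_const, hmdef]
    have key : (1 : ℝ≥0∞) ≤ c * ENNReal.ofReal q ^ m := by
      rw [← ENNReal.ofReal_pow hq0.le, hcdef,
        ← ENNReal.ofReal_mul (Real.rpow_nonneg hq0.le _)]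
      rw [show q ^ (-((S.card : ℝ) ^ 2) / 2) * q ^ m
          = q ^ ((-((S.card : ℝ) ^ 2) / 2) + m) by
        rw [← Real.rpow_natCast q m, ← Real.rpow_add hq0]]
      refine ENNReal.one_le_ofReal.2 ?_
      refine Real.one_le_rpow_of_pos_of_le_one_of_nonpos hq0 hq1 ?_
      have h1 : (m : ℝ) ≤ ((edgesIn n S).card : ℝ) := by
        exact_mod_cast Finset.card_filter_le _ _
      have h2 := card_edgesIn_le (n := n) (S := S)
      linarith
    calc erMeasure n p {ω | T ≤ (erGraph n ω).induce (S : Set (Fin n))}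
        = 1 * ENNReal.ofReal p ^ a := by rw [hm1, one_mul]
      _ ≤ (c * ENNReal.ofReal q ^ m) * ENNReal.ofReal p ^ a := mul_le_mul_left key _
      _ = c * (ENNReal.ofReal p ^ a * ENNReal.ofReal q ^ m) := by ring
      _ = c * erMeasure n p {ω | (erGraph n ω).induce (S : Set (Fin n)) = T} := by rw [hm2]
  -- Step 3 : disjointness
  have step3 : ∑ T ∈ trees, erMeasure n p {ω | (erGraph n ω).induce (S : Set (Fin n)) = T}
      ≤ erMeasure n p {ω | ((erGraph n ω).induce (S : Set (Fin n))).IsTree} := by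
    have hdisj : (↑trees : Set (SimpleGraph (S : Set (Fin n)))).PairwiseDisjoint
        (fun T => {ω | (erGraph n ω).induce (S : Set (Fin n)) = T}) := by
      intro T _ T' _ hne
      refine Set.disjoint_left.2 ?_
      intro ω h1 h2
      have h1' : (erGraph n ω).induce (S : Set (Fin n)) = T := h1
      have h2' : (erGraph n ω).induce (S : Set (Fin n)) = T' := h2
      exact hne (h1'.symm.trans h2')
    rw [← measure_biUnion_finset hdisj (fun T _ => hmeas _)]
    refine measure_mono ?_
    intro ω hω
    simp only [Set.mem_iUnion, Set.mem_setOf_eq] at hω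
    obtain ⟨T, hT, hωT⟩ := hω
    have : T.IsTree := by
      simpa [htrees] using hT
    rw [Set.mem_setOf_eq, hωT]
    exact this
  calc erMeasure n p {ω | ((erGraph n ω).induce (S : Set (Fin n))).Connected}
      ≤ ∑ T ∈ trees, erMeasure n p {ω | T ≤ (erGraph n ω).induce (S : Set (Fin n))} := step1
    _ ≤ ∑ T ∈ trees, c * erMeasure n p {ω | (erGraph n ω).induce (S : Set (Fin n)) = T} :=
        Finset.sum_le_sum (fun T _ => step2 T)
    _ = c * ∑ T ∈ trees, erMeasure n p {ω | (erGraph n ω).induce (S : Set (Fin n)) = T} := by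
        rw [Finset.mul_sum]
    _ ≤ c * erMeasure n p {ω | ((erGraph n ω).induce (S : Set (Fin n))).IsTree} :=
        mul_le_mul_right step3 c
end
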